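/- arXiv:1302.1402 — 7 statements merged into one kernel-verified Lean document; each statement's English description precedes it below -/
import Mathlib

section
/- If a finite simple graph G is distance-hereditary, then G contains no induced subgraph isomorphic to the house, no induced subgraph isomorphic to the domino, no induced subgraph isomorphic to the gem, and no induced chordless cycle C_n with n ≥ 5 (no hole). (Direction (i) ⇒ (iii) of the Bandelt–Mulder characterization, Theorem 1.) -/
open SimpleGraph

/-- `G` is distance-hereditary: in every connected induced subgraph,
distances agree with those in `G`. -/
def DistanceHereditary {V : Type*} (G : SimpleGraph V) : Prop :=
  ∀ S : Set V, (G.induce S).Connected →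
    ∀ u v : S, (G.induce S).dist u v = G.dist u.1 v.1

/-- `G` contains `H` as an induced subgraph: there is an injection of the
vertices of `H` into those of `G` preserving adjacency and non-adjacency. -/
def ContainsInduced {α β : Type*} (H : SimpleGraph α) (G : SimpleGraph β) : Prop :=
  ∃ f : α → β, Function.Injective f ∧ ∀ a b : α, H.Adj a b ↔ G.Adj (f a) (f b)

/-- The house: vertices a,b,c,d,e = 0,1,2,3,4; edges ab,bc,cd,ad,ae,be. -/
def house : SimpleGraph (Fin 5) :=
  SimpleGraph.fromEdgeSet {s(0,1), s(1,2), s(2,3), s(0,3), s(0,4), s(1,4)}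

/-- The gem: vertices a,b,c,d,e = 0,1,2,3,4; edges ab,bc,cd,ae,be,ce,de. -/
def gem : SimpleGraph (Fin 5) :=
  SimpleGraph.fromEdgeSet {s(0,1), s(1,2), s(2,3), s(0,4), s(1,4), s(2,4), s(3,4)}

/-- The domino: vertices a,b,c,d,e,h = 0,1,2,3,4,5; edges ab,bc,cd,ad,be,eh,ch. -/
def domino : SimpleGraph (Fin 6) :=
  SimpleGraph.fromEdgeSet {s(0,1), s(1,2), s(2,3), s(0,3), s(1,4), s(4,5), s(2,5)}

/-- `G` is (house, hole, domino, gem)-free. A hole is an induced `C_n`, `n ≥ 5`. -/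
def HHDGFree {V : Type*} (G : SimpleGraph V) : Prop :=
  ¬ ContainsInduced house G ∧
  (∀ n : ℕ, 5 ≤ n → ¬ ContainsInduced (SimpleGraph.cycleGraph n) G) ∧
  ¬ ContainsInduced domino G ∧
  ¬ ContainsInduced gem G

/-- A stable (independent) set: pairwise non-adjacent vertices. -/
def IsStableSet {V : Type*} (G : SimpleGraph V) (s : Set V) : Prop :=
  s.Pairwise fun a b => ¬ G.Adj a b

/-- `T` is a cycle-transversal of `G`: every cycle of `G` contains a vertex of `T`. -/
def IsCycleTransversal {V : Type*} (G : SimpleGraph V) (T : Set V) : Prop :=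
  ∀ ⦃v : V⦄ (c : G.Walk v v), c.IsCycle → ∃ w ∈ c.support, w ∈ T

/-- A clique cycle-transversal (cct): a cycle-transversal that is a clique. -/
def IsCCT {V : Type*} (G : SimpleGraph V) (T : Set V) : Prop :=
  G.IsClique T ∧ IsCycleTransversal G T

/-! ### Auxiliary lemmas -/

lemma iso_dist_le {V W : Type*} {G : SimpleGraph V} {H : SimpleGraph W} (e : G ≃g H)
    (u v : V) : H.dist (e u) (e v) ≤ G.dist u v := by
  by_cases hr : G.Reachable u v
  · obtain ⟨p, hp⟩ := hr.exists_walk_length_eq_dist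
    calc H.dist (e u) (e v) ≤ (p.map e.toHom).length := SimpleGraph.dist_le _
      _ = G.dist u v := by simpa using hp
  · rw [SimpleGraph.dist_eq_zero_of_not_reachable hr,
      SimpleGraph.dist_eq_zero_of_not_reachable (fun h => hr ((Iso.reachable_iff (φ := e)).mp h))]

lemma iso_dist_eq {V W : Type*} {G : SimpleGraph V} {H : SimpleGraph W} (e : G ≃g H)
    (u v : V) : G.dist u v = H.dist (e u) (e v) := by
  refine le_antisymm ?_ (iso_dist_le e u v)
  have := iso_dist_le e.symm (e u) (e v)
  simpa using this

noncomputable def isoRange {α V : Type*} {H : SimpleGraph α} {G : SimpleGraph V} {f : α → V}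
    (hinj : Function.Injective f) (hadj : ∀ a b, H.Adj a b ↔ G.Adj (f a) (f b)) :
    H ≃g G.induce (Set.range f) where
  toEquiv := Equiv.ofInjective f hinj
  map_rel_iff' := by
    intro a b
    simp [Equiv.ofInjective, comap_adj, hadj]

noncomputable def isoImage {α V : Type*} {H : SimpleGraph α} {G : SimpleGraph V} {f : α → V}
    (hinj : Function.Injective f) (hadj : ∀ a b, H.Adj a b ↔ G.Adj (f a) (f b)) (s : Set α) :
    H.induce s ≃g G.induce (f '' s) where
  toEquiv := Equiv.Set.image f s hinj
  map_rel_iff' := by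
    intro a b
    simp [Equiv.Set.image, Equiv.Set.imageOfInjOn, comap_adj, hadj]

lemma dh_key {V α : Type*} {G : SimpleGraph V} (hG : DistanceHereditary G)
    {H : SimpleGraph α} {f : α → V} (hinj : Function.Injective f)
    (hadj : ∀ a b, H.Adj a b ↔ G.Adj (f a) (f b))
    (hc : H.Connected) {s : Set α} (hcs : (H.induce s).Connected)
    (a b : α) (ha : a ∈ s) (hb : b ∈ s) :
    (H.induce s).dist ⟨a, ha⟩ ⟨b, hb⟩ = H.dist a b := by
  let e1 := isoRange hinj hadj
  let e2 := isoImage hinj hadj s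
  have h1 : (G.induce (Set.range f)).Connected := e1.connected_iff.mp hc
  have h2 : (G.induce (f '' s)).Connected := e2.connected_iff.mp hcs
  have d1 := hG (Set.range f) h1 (e1 a) (e1 b)
  have d2 := hG (f '' s) h2 (e2 ⟨a, ha⟩) (e2 ⟨b, hb⟩)
  rw [iso_dist_eq e2 ⟨a, ha⟩ ⟨b, hb⟩, d2, iso_dist_eq e1 a b, d1]
  have ha' : (↑(e2 ⟨a, ha⟩) : V) = ↑(e1 a) := by
    simp [e1, e2, isoRange, isoImage, Equiv.Set.image, Equiv.Set.imageOfInjOn, Equiv.ofInjective]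
  have hb' : (↑(e2 ⟨b, hb⟩) : V) = ↑(e1 b) := by
    simp [e1, e2, isoRange, isoImage, Equiv.Set.image, Equiv.Set.imageOfInjOn, Equiv.ofInjective]
  rw [ha', hb']

lemma three_le_dist_aux {V : Type*} {G : SimpleGraph V} {u v : V}
    (hr : G.Reachable u v) (hne : u ≠ v) (hadj : ¬G.Adj u v)
    (hmid : ∀ w, ¬(G.Adj u w ∧ G.Adj w v)) : 3 ≤ G.dist u v := by
  obtain ⟨p, hp⟩ := hr.exists_walk_length_eq_dist
  rw [← hp]
  match p with
  | .nil => exact absurd rfl hne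
  | .cons h .nil => exact absurd h hadj
  | .cons h (.cons h' .nil) => exact absurd ⟨h, h'⟩ (hmid _)
  | .cons _ (.cons _ (.cons _ q)) =>
    simp only [Walk.length_cons]
    omega

instance : DecidableRel house.Adj := fun a b =>
  decidable_of_iff (s(a, b) ∈ ({s(0,1), s(1,2), s(2,3), s(0,3), s(0,4), s(1,4)} :
    Finset (Sym2 (Fin 5))) ∧ a ≠ b) (by simp [house, fromEdgeSet_adj])

instance : DecidableRel gem.Adj := fun a b =>
  decidable_of_iff (s(a, b) ∈ ({s(0,1), s(1,2), s(2,3), s(0,4), s(1,4), s(2,4), s(3,4)} :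
    Finset (Sym2 (Fin 5))) ∧ a ≠ b) (by simp [gem, fromEdgeSet_adj])

instance : DecidableRel domino.Adj := fun a b =>
  decidable_of_iff (s(a, b) ∈ ({s(0,1), s(1,2), s(2,3), s(0,3), s(1,4), s(4,5), s(2,5)} :
    Finset (Sym2 (Fin 6))) ∧ a ≠ b) (by simp [domino, fromEdgeSet_adj])

instance instIndAdj {V : Type*} (G : SimpleGraph V) [DecidableRel G.Adj] (s : Set V) :
    DecidableRel (G.induce s).Adj := fun a b =>
  decidable_of_iff (G.Adj a.1 b.1) (by simp [comap_adj])

lemma mod_helper (m a b : ℕ) (ha : a < m + 5) (hb : b < m + 5) :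
    (m + 5 - b + a) % (m + 5) = 1 ↔ (a = b + 1 ∨ (a = 0 ∧ b = m + 4)) := by
  rcases le_or_gt b a with h | h
  · have e : m + 5 - b + a = (m + 5) + (a - b) := by omega
    rw [e, Nat.add_mod_left, Nat.mod_eq_of_lt (by omega)]
    omega
  · have e : m + 5 - b + a < m + 5 := by omega
    rw [Nat.mod_eq_of_lt e]
    omega

lemma cyc_adj_iff (m a b : ℕ) (ha : a < m + 5) (hb : b < m + 5) :
    (cycleGraph (m + 5)).Adj ⟨a, ha⟩ ⟨b, hb⟩ ↔
      (a = b + 1 ∨ b = a + 1 ∨ (a = 0 ∧ b = m + 4) ∨ (b = 0 ∧ a = m + 4)) := by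
  rw [cycleGraph_adj']
  simp only [Fin.sub_def, Fin.val_mk]
  rw [mod_helper m a b ha hb, mod_helper m b a hb ha]
  tauto

/-- distance-hereditary ⟹ (house, hole, domino, gem)-free. -/
theorem distanceHereditary_implies_HHDGFree {V : Type*} [Fintype V] (G : SimpleGraph V)
    (hG : DistanceHereditary G) :
    ¬ ContainsInduced house G ∧ ¬ ContainsInduced domino G ∧ ¬ ContainsInduced gem G ∧
      ∀ n : ℕ, 5 ≤ n → ¬ ContainsInduced (SimpleGraph.cycleGraph n) G := by
  refine ⟨?_, ?_, ?_, ?_⟩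
  · rintro ⟨f, hinj, hadj⟩
    have hcon : house.Connected := by rw [connected_iff]; exact ⟨by decide, ⟨0⟩⟩
    have hcs : (house.induce {x | x ≠ 0}).Connected := by
      rw [connected_iff]; exact ⟨by decide, ⟨⟨1, by decide⟩⟩⟩
    have key := dh_key hG hinj hadj hcon hcs 4 3 (by decide) (by decide)
    have hub : house.dist 4 3 ≤ 2 := by
      let w : house.Walk 4 3 := .cons (by decide : house.Adj 4 0) (.cons (by decide) .nil)
      calc house.dist 4 3 ≤ w.length := SimpleGraph.dist_le w
        _ = 2 := rfl
    have hlb : 3 ≤ (house.induce {x | x ≠ 0}).dist ⟨4, by decide⟩ ⟨3, by decide⟩ :=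
      three_le_dist_aux (hcs.preconnected _ _) (by decide) (by decide) (by decide)
    rw [key] at hlb
    omega
  · rintro ⟨f, hinj, hadj⟩
    have hcon : domino.Connected := by rw [connected_iff]; exact ⟨by decide, ⟨0⟩⟩
    have hcs : (domino.induce {x | x ≠ 1}).Connected := by
      rw [connected_iff]; exact ⟨by decide, ⟨⟨0, by decide⟩⟩⟩
    have key := dh_key hG hinj hadj hcon hcs 0 4 (by decide) (by decide)
    have hub : domino.dist 0 4 ≤ 2 := by
      let w : domino.Walk 0 4 := .cons (by decide : domino.Adj 0 1) (.cons (by decide) .nil)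
      calc domino.dist 0 4 ≤ w.length := SimpleGraph.dist_le w
        _ = 2 := rfl
    have hlb : 3 ≤ (domino.induce {x | x ≠ 1}).dist ⟨0, by decide⟩ ⟨4, by decide⟩ :=
      three_le_dist_aux (hcs.preconnected _ _) (by decide) (by decide) (by decide)
    rw [key] at hlb
    omega
  · rintro ⟨f, hinj, hadj⟩
    have hcon : gem.Connected := by rw [connected_iff]; exact ⟨by decide, ⟨0⟩⟩
    have hcs : (gem.induce {x | x ≠ 4}).Connected := by
      rw [connected_iff]; exact ⟨by decide, ⟨⟨0, by decide⟩⟩⟩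
    have key := dh_key hG hinj hadj hcon hcs 0 3 (by decide) (by decide)
    have hub : gem.dist 0 3 ≤ 2 := by
      let w : gem.Walk 0 3 := .cons (by decide : gem.Adj 0 4) (.cons (by decide) .nil)
      calc gem.dist 0 3 ≤ w.length := SimpleGraph.dist_le w
        _ = 2 := rfl
    have hlb : 3 ≤ (gem.induce {x | x ≠ 4}).dist ⟨0, by decide⟩ ⟨3, by decide⟩ :=
      three_le_dist_aux (hcs.preconnected _ _) (by decide) (by decide) (by decide)
    rw [key] at hlb
    omega
  · intro n hn
    obtain ⟨m, rfl⟩ : ∃ m, n = m + 5 := ⟨n - 5, by omega⟩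
    rintro ⟨f, hinj, hadj⟩
    set s : Set (Fin (m + 5)) := {x | x.val ≠ 1} with hs
    have hcon : (cycleGraph (m + 5)).Connected := cycleGraph_connected
    -- reachability towards the vertex 0 in the induced subgraph
    have reach0 : ∀ d t : ℕ, (h2 : 2 ≤ t) → (h4 : t ≤ m + 4) → m + 4 - t ≤ d →
        ((cycleGraph (m + 5)).induce s).Reachable
          ⟨⟨t, by omega⟩, by simp only [hs, Set.mem_setOf_eq]; omega⟩
          ⟨⟨0, by omega⟩, by simp only [hs, Set.mem_setOf_eq]; omega⟩ := by
      intro d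
      induction d with
      | zero =>
        intro t h2 h4 hd
        refine Adj.reachable ?_
        simp only [comap_adj, Function.Embedding.coe_subtype]
        rw [cyc_adj_iff]
        omega
      | succ d ih =>
        intro t h2 h4 hd
        by_cases ht : t = m + 4
        · refine Adj.reachable ?_
          simp only [comap_adj, Function.Embedding.coe_subtype]
          rw [cyc_adj_iff]
          omega
        · have hadj' : ((cycleGraph (m + 5)).induce s).Adj
              ⟨⟨t, by omega⟩, by simp only [hs, Set.mem_setOf_eq]; omega⟩
              ⟨⟨t + 1, by omega⟩, by simp only [hs, Set.mem_setOf_eq]; omega⟩ := by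
            simp only [comap_adj, Function.Embedding.coe_subtype]
            rw [cyc_adj_iff]
            omega
          exact hadj'.reachable.trans (ih (t + 1) (by omega) (by omega) (by omega))
    have hto : ∀ w : ↥s, ((cycleGraph (m + 5)).induce s).Reachable w
        ⟨⟨0, by omega⟩, by simp only [hs, Set.mem_setOf_eq]; omega⟩ := by
      rintro ⟨⟨t, ht⟩, hts⟩
      have hts' : t ≠ 1 := hts
      rcases Nat.eq_zero_or_pos t with h0 | h0
      · subst h0
        exact Reachable.refl _
      · have h2 : 2 ≤ t := by omega
        exact reach0 (m + 4 - t) t h2 (by omega) le_rfl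
    have hcs : ((cycleGraph (m + 5)).induce s).Connected := by
      rw [connected_iff]
      refine ⟨fun u v => (hto u).trans (hto v).symm,
        ⟨⟨⟨0, by omega⟩, by simp only [hs, Set.mem_setOf_eq]; omega⟩⟩⟩
    have key := dh_key hG hinj hadj hcon hcs ⟨0, by omega⟩ ⟨2, by omega⟩
      (by simp only [hs, Set.mem_setOf_eq]; omega) (by simp only [hs, Set.mem_setOf_eq]; omega)
    have hub : (cycleGraph (m + 5)).dist ⟨0, by omega⟩ ⟨2, by omega⟩ ≤ 2 := by
      have h01 : (cycleGraph (m + 5)).Adj ⟨0, by omega⟩ ⟨1, by omega⟩ := by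
        rw [cyc_adj_iff]; omega
      have h12 : (cycleGraph (m + 5)).Adj ⟨1, by omega⟩ ⟨2, by omega⟩ := by
        rw [cyc_adj_iff]; omega
      let w : (cycleGraph (m + 5)).Walk ⟨0, by omega⟩ ⟨2, by omega⟩ := .cons h01 (.cons h12 .nil)
      calc (cycleGraph (m + 5)).dist ⟨0, by omega⟩ ⟨2, by omega⟩ ≤ w.length :=
          SimpleGraph.dist_le w
        _ = 2 := rfl
    have hlb : 3 ≤ ((cycleGraph (m + 5)).induce s).dist
        ⟨⟨0, by omega⟩, by simp only [hs, Set.mem_setOf_eq]; omega⟩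
        ⟨⟨2, by omega⟩, by simp only [hs, Set.mem_setOf_eq]; omega⟩ := by
      refine three_le_dist_aux (hcs.preconnected _ _) ?_ ?_ ?_
      · intro h
        have h' : (0 : ℕ) = 2 := congrArg (fun x => x.1.1) h
        omega
      · simp only [comap_adj, Function.Embedding.coe_subtype]
        rw [cyc_adj_iff]
        omega
      · rintro ⟨⟨t, ht⟩, hts⟩ ⟨h1, h2⟩
        have hts' : t ≠ 1 := hts
        simp only [comap_adj, Function.Embedding.coe_subtype] at h1 h2
        rw [cyc_adj_iff] at h1 h2
        omega
    rw [key] at hlb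
    omega
end

section
/- If a finite simple graph G contains no induced subgraph isomorphic to the house, the domino, or the gem, and contains no induced chordless cycle C_n with n ≥ 5 (no hole), then G is distance-hereditary. (Direction (iii) ⇒ (i) of the Bandelt–Mulder characterization, Theorem 1.) -/
open SimpleGraph

/-!
Every induced path is a shortest path; since a shortest path of a connected induced subgraph is
an induced path of `G`, this gives distance-heredity.

The proof is by induction on the length `k` of the induced path `f 0, …, f k`. If its ends are at
distance `d < k`, then `k - 2 ≤ d` because `f 0, …, f (k - 1)` is a shortest path; let `p` be a
shortest path between the ends. An inner vertex `x` of `p` seeing some `f j` with `j ≥ 2` but not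
`f k` yields, through the last such `j`, the shorter induced path `x, f j, …, f k`; by induction
it is a shortest path, which makes `x` too far from the ends to lie on `p`. Hence the inner
vertices of `p` see `f` only next to its ends. For `d ≥ 3` this makes `p` and `f` close up to a
hole; for `d = 2` the middle vertex of `p` and the path `f` of length `3` or `4` induce a house, a
gem, a domino or a hole.
-/

section InducedCopies

variable {α V : Type*} [LinearOrder α] {H : SimpleGraph α} {G : SimpleGraph V}

lemma adj_iff_of_forall_lt {g : α → V}
    (hg : ∀ a b, a < b → (H.Adj a b ↔ G.Adj (g a) (g b))) (a b : α) :
    H.Adj a b ↔ G.Adj (g a) (g b) := by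
  rcases lt_trichotomy a b with h | rfl | h
  · exact hg a b h
  · simp
  · rw [H.adj_comm, G.adj_comm]; exact hg b a h

lemma containsInduced_of_forall_lt (g : α → V) (hinj : Function.Injective g)
    (hg : ∀ a b, a < b → (H.Adj a b ↔ G.Adj (g a) (g b))) : ContainsInduced H G :=
  ⟨g, hinj, adj_iff_of_forall_lt hg⟩

lemma containsInduced_of_forall_lt_of_twinFree
    (hH : ∀ a b, (∀ c, H.Adj a c ↔ H.Adj b c) → a = b) (g : α → V)
    (hg : ∀ a b, a < b → (H.Adj a b ↔ G.Adj (g a) (g b))) : ContainsInduced H G := by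
  refine containsInduced_of_forall_lt g (fun a b hab => hH a b fun c => ?_) hg
  rw [adj_iff_of_forall_lt hg, adj_iff_of_forall_lt hg, hab]

end InducedCopies

namespace SimpleGraph

variable {V : Type*} {G : SimpleGraph V}

/-- `f 0, f 1, …, f k` are the vertices, in order, of an induced path of length `k`;
the values of `f` beyond `k` play no role. -/
structure IsInducedPath (G : SimpleGraph V) (k : ℕ) (f : ℕ → V) : Prop where
  injOn : Set.InjOn f (Set.Iic k)
  adj_iff : ∀ ⦃i j⦄, i ≤ k → j ≤ k → (G.Adj (f i) (f j) ↔ i + 1 = j ∨ j + 1 = i)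

lemma isInducedPath_zero (f : ℕ → V) : IsInducedPath G 0 f where
  injOn i hi j hj _ := by simp_all
  adj_iff i j hi hj := by simp [Nat.le_zero.mp hi, Nat.le_zero.mp hj]

namespace IsInducedPath

variable {k : ℕ} {f : ℕ → V}

lemma adj (hf : IsInducedPath G k f) {i : ℕ} (hi : i < k) : G.Adj (f i) (f (i + 1)) :=
  (hf.adj_iff hi.le hi).2 (Or.inl rfl)

lemma ne (hf : IsInducedPath G k f) {i j : ℕ} (hi : i ≤ k) (hj : j ≤ k) (hij : i ≠ j) :
    f i ≠ f j :=
  fun h => hij (hf.injOn hi hj h)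

lemma reachable (hf : IsInducedPath G k f) {i : ℕ} (hi : i ≤ k) : G.Reachable (f 0) (f i) := by
  induction i with
  | zero => rfl
  | succ i ih => exact (ih (by omega)).trans (hf.adj (by omega)).reachable

lemma reverse (hf : IsInducedPath G k f) : IsInducedPath G k (fun i => f (k - i)) where
  injOn i hi j hj h := by
    have := hf.injOn (show k - i ≤ k by omega) (show k - j ≤ k by omega) h
    simp only [Set.mem_Iic] at hi hj
    omega
  adj_iff i j hi hj := by
    rw [hf.adj_iff (by omega) (by omega)]
    omega

lemma comp_add (hf : IsInducedPath G k f) {a m : ℕ} (h : a + m ≤ k) :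
    IsInducedPath G m (fun i => f (a + i)) where
  injOn i hi j hj hij := by
    simp only [Set.mem_Iic] at hi hj
    have := hf.injOn (show a + i ≤ k by omega) (show a + j ≤ k by omega) hij
    omega
  adj_iff i j hi hj := by
    rw [hf.adj_iff (by omega) (by omega)]
    omega

lemma cons (hf : IsInducedPath G k f) {x : V} (hx : ∀ i ≤ k, x ≠ f i) (hx0 : G.Adj x (f 0))
    (hxf : ∀ i, 1 ≤ i → i ≤ k → ¬ G.Adj x (f i)) :
    IsInducedPath G (k + 1) (fun i => if i = 0 then x else f (i - 1)) where
  injOn i hi j hj hij := by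
    simp only [Set.mem_Iic] at hi hj
    rcases i with _ | i <;> rcases j with _ | j <;>
      simp only [if_true, Nat.add_one_ne_zero, if_false, Nat.add_sub_cancel] at hij
    · rfl
    · exact absurd hij (hx j (by omega))
    · exact absurd hij.symm (hx i (by omega))
    · rw [hf.injOn (show i ≤ k by omega) (show j ≤ k by omega) hij]
  adj_iff i j hi hj := by
    have hxf' : ∀ i, i ≤ k → (G.Adj x (f i) ↔ i = 0) := fun i hi =>
      ⟨fun h => by by_contra h0; exact hxf i (by omega) hi h, by rintro rfl; exact hx0⟩
    rcases i with _ | i <;> rcases j with _ | j <;>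
      simp only [if_true, Nat.add_one_ne_zero, if_false, Nat.add_sub_cancel]
    · simp
    · rw [hxf' j (by omega), or_false]; omega
    · rw [G.adj_comm, hxf' i (by omega), false_or]; omega
    · rw [hf.adj_iff (by omega) (by omega)]; omega

lemma map {W : Type*} {G' : SimpleGraph W} (hf : IsInducedPath G k f) (φ : G ↪g G') :
    IsInducedPath G' k (φ ∘ f) where
  injOn := φ.injective.comp_injOn hf.injOn
  adj_iff i j hi hj := by simpa using hf.adj_iff hi hj

end IsInducedPath

namespace Walk

variable {u v : V} {p : G.Walk u v}

lemma dist_getVert (hp : p.length = G.dist u v) {i : ℕ} (hi : i ≤ p.length) :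
    G.dist u (p.getVert i) = i := by
  simpa [min_eq_left hi] using (length_eq_dist_of_subwalk hp (p.isSubwalk_take i)).symm

lemma dist_getVert_right (hp : p.length = G.dist u v) (i : ℕ) :
    G.dist (p.getVert i) v = p.length - i := by
  simpa using (length_eq_dist_of_subwalk hp (p.isSubwalk_drop i)).symm

lemma isInducedPath_getVert (hp : p.length = G.dist u v) :
    IsInducedPath G p.length p.getVert where
  injOn i hi j hj hij := by
    rw [← p.dist_getVert hp hi, ← p.dist_getVert hp hj, hij]
  adj_iff i j hi hj := by
    refine ⟨fun h => ?_, ?_⟩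
    · have hne : i ≠ j := by rintro rfl; exact h.ne rfl
      have := h.diff_dist_adj (u := u)
      rw [p.dist_getVert hp hi, p.dist_getVert hp hj] at this
      omega
    · rintro (rfl | rfl)
      · exact p.adj_getVert_succ (by omega)
      · exact (p.adj_getVert_succ (by omega)).symm

end Walk

lemma containsInduced_cycleGraph_of_adj_iff {N : ℕ} (g : ℕ → V)
    (hg : Set.InjOn g (Set.Iio N))
    (hadj : ∀ ⦃i j⦄, i < j → j < N →
      (G.Adj (g i) (g j) ↔ j = i + 1 ∨ (i = 0 ∧ j = N - 1))) :
    ContainsInduced (cycleGraph N) G := by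
  refine containsInduced_of_forall_lt (fun a => g a)
    (fun a b h => Fin.ext (hg a.isLt b.isLt h)) fun a b hab => ?_
  rw [cycleGraph_adj', Fin.sub_val_of_le hab.le, Fin.coe_sub_iff_lt.mpr hab, hadj hab b.isLt]
  have := b.isLt
  omega

lemma IsInducedPath.containsInduced_cycleGraph {m n : ℕ} {u w : ℕ → V}
    (hu : IsInducedPath G m u) (hw : IsInducedPath G n w)
    (hdisj : ∀ i ≤ m, ∀ j ≤ n, u i ≠ w j)
    (hcross : ∀ ⦃i j⦄, i ≤ m → j ≤ n →
      (G.Adj (u i) (w j) ↔ (i = m ∧ j = 0) ∨ (i = 0 ∧ j = n))) :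
    ContainsInduced (cycleGraph (m + n + 2)) G := by
  refine containsInduced_cycleGraph_of_adj_iff
    (fun i => if i ≤ m then u i else w (i - (m + 1))) (fun i hi j hj hij => ?_)
    fun i j hij hj => ?_
  · simp only [Set.mem_Iio] at hi hj
    by_cases him : i ≤ m <;> by_cases hjm : j ≤ m <;>
      simp only [him, hjm, if_true, if_false] at hij
    · exact hu.injOn him hjm hij
    · exact absurd hij (hdisj i him _ (by omega))
    · exact absurd hij.symm (hdisj j hjm _ (by omega))
    · have := hw.injOn (show i - (m + 1) ≤ n by omega) (show j - (m + 1) ≤ n by omega) hij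
      omega
  · by_cases him : i ≤ m <;> by_cases hjm : j ≤ m <;> simp only [him, hjm, if_true, if_false]
    · rw [hu.adj_iff him hjm]; omega
    · rw [hcross him (by omega)]; omega
    · omega
    · rw [hw.adj_iff (by omega) (by omega)]; omega

section SmallConfigurations

variable {f : ℕ → V} {x : V}

-- Deciding that the gem and the domino have no twins needs a larger instance search.
set_option synthInstance.maxSize 512 in
lemma IsInducedPath.containsInduced_house_or_gem_or_cycleGraph_five (hf : IsInducedPath G 3 f)
    (hx : ∀ i ≤ 3, x ≠ f i) (h0 : G.Adj x (f 0)) (h3 : G.Adj x (f 3)) :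
    ContainsInduced house G ∨ ContainsInduced gem G ∨ ContainsInduced (cycleGraph 5) G := by
  by_cases h1 : G.Adj x (f 1) <;> by_cases h2 : G.Adj x (f 2)
  · refine Or.inr (Or.inl (containsInduced_of_forall_lt_of_twinFree (by unfold gem; decide)
      ![f 0, f 1, f 2, f 3, x] fun a b hab => ?_))
    fin_cases a <;> fin_cases b <;> simp_all [gem, hf.adj_iff, G.adj_comm x]
  · refine Or.inl (containsInduced_of_forall_lt_of_twinFree (by unfold house; decide)
      ![f 1, x, f 3, f 2, f 0] fun a b hab => ?_)
    fin_cases a <;> fin_cases b <;> simp_all [house, hf.adj_iff, G.adj_comm x]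
  · refine Or.inl (containsInduced_of_forall_lt_of_twinFree (by unfold house; decide)
      ![x, f 2, f 1, f 0, f 3] fun a b hab => ?_)
    fin_cases a <;> fin_cases b <;> simp_all [house, hf.adj_iff, G.adj_comm x]
  · refine Or.inr (Or.inr (hf.containsInduced_cycleGraph (isInducedPath_zero fun _ => x)
      (fun i hi _ _ => (hx i hi).symm) fun i j hi hj => ?_))
    interval_cases i <;> simp_all [G.adj_comm _ x]

set_option synthInstance.maxSize 512 in
lemma IsInducedPath.containsInduced_domino_or_cycleGraph_six (hf : IsInducedPath G 4 f)
    (hx : ∀ i ≤ 4, x ≠ f i) (h0 : G.Adj x (f 0)) (h1 : ¬ G.Adj x (f 1))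
    (h3 : ¬ G.Adj x (f 3)) (h4 : G.Adj x (f 4)) :
    ContainsInduced domino G ∨ ContainsInduced (cycleGraph 6) G := by
  by_cases h2 : G.Adj x (f 2)
  · refine Or.inl (containsInduced_of_forall_lt_of_twinFree (by unfold domino; decide)
      ![f 1, f 2, x, f 0, f 3, f 4] fun a b hab => ?_)
    fin_cases a <;> fin_cases b <;> simp_all [domino, hf.adj_iff, G.adj_comm x]
  · refine Or.inr (hf.containsInduced_cycleGraph (isInducedPath_zero fun _ => x)
      (fun i hi _ _ => (hx i hi).symm) fun i j hi hj => ?_)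
    interval_cases i <;> simp_all [G.adj_comm _ x]

end SmallConfigurations

def InducedPathsGeodesicBelow (G : SimpleGraph V) (k : ℕ) : Prop :=
  ∀ m < k, ∀ g : ℕ → V, IsInducedPath G m g → G.dist (g 0) (g m) = m

namespace IsInducedPath

variable {k : ℕ} {f : ℕ → V}

lemma dist_zero_eq (hf : IsInducedPath G k f) (hIH : G.InducedPathsGeodesicBelow k) {j : ℕ}
    (hj : j < k) : G.dist (f 0) (f j) = j := by
  simpa using hIH j hj _ (hf.comp_add (a := 0) (m := j) (by omega))

lemma dist_eq_sub (hf : IsInducedPath G k f) (hIH : G.InducedPathsGeodesicBelow k) {j : ℕ}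
    (hj0 : 0 < j) (hj : j ≤ k) : G.dist (f j) (f k) = k - j := by
  simpa [Nat.add_sub_cancel' hj] using
    hIH (k - j) (by omega) _ (hf.comp_add (a := j) (m := k - j) (by omega))

lemma adj_last_or_le_dist_add_dist (hf : IsInducedPath G k f)
    (hIH : G.InducedPathsGeodesicBelow k) {x : V} (hx : ∀ i ≤ k, x ≠ f i) {j : ℕ}
    (hj : 2 ≤ j) (hjk : j ≤ k) (hxj : G.Adj x (f j)) :
    G.Adj x (f k) ∨ k ≤ G.dist (f 0) x + G.dist x (f k) := by
  classical
  obtain ⟨l, hjl, hlk, hxl, hmax⟩ : ∃ l, j ≤ l ∧ l ≤ k ∧ G.Adj x (f l) ∧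
      ∀ i, l < i → i ≤ k → ¬ G.Adj x (f i) :=
    ⟨_, Nat.le_findGreatest hjk hxj, Nat.findGreatest_le k,
      Nat.findGreatest_spec (P := fun i => G.Adj x (f i)) hjk hxj,
      fun i => Nat.findGreatest_is_greatest⟩
  rcases hlk.eq_or_lt with rfl | hlk
  · exact Or.inl hxl
  have hpath := (hf.comp_add (a := l) (m := k - l) (by omega)).cons
    (fun i _ => hx _ (by omega)) (by simpa using hxl) fun i _ _ => hmax _ (by omega) (by omega)
  have hxk : G.dist x (f k) = k - l + 1 := by
    simpa [Nat.add_sub_cancel' hlk.le] using hIH (k - l + 1) (by omega) _ hpath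
  have hl : G.dist (f 0) (f l) ≤ G.dist (f 0) x + G.dist x (f l) :=
    hxl.reachable.dist_triangle_right _
  rw [hf.dist_zero_eq hIH hlk, dist_eq_one_iff_adj.mpr hxl] at hl
  omega

lemma adj_first_or_le_dist_add_dist (hf : IsInducedPath G k f)
    (hIH : G.InducedPathsGeodesicBelow k) {x : V} (hx : ∀ i ≤ k, x ≠ f i) {j : ℕ}
    (hjk : j + 2 ≤ k) (hxj : G.Adj x (f j)) :
    G.Adj x (f 0) ∨ k ≤ G.dist (f 0) x + G.dist x (f k) := by
  have := hf.reverse.adj_last_or_le_dist_add_dist hIH (fun i _ => hx _ (by omega))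
    (j := k - j) (by omega) (Nat.sub_le k j) (by rwa [Nat.sub_sub_self (by omega)])
  simpa [dist_comm, add_comm] using this

variable {p : G.Walk (f 0) (f k)}

lemma getVert_ne (hf : IsInducedPath G k f) (hIH : G.InducedPathsGeodesicBelow k)
    (hp : p.length = G.dist (f 0) (f k)) (hpk : p.length < k) {i j : ℕ} (hi : 0 < i)
    (hip : i < p.length) (hj : j ≤ k) : p.getVert i ≠ f j := by
  intro h
  have h0 := p.dist_getVert hp hip.le
  have hk := p.dist_getVert_right hp i
  rw [h] at h0 hk
  rcases Nat.eq_zero_or_pos j with rfl | hj0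
  · simp at h0; omega
  rcases hj.eq_or_lt with rfl | hjk
  · simp at hk; omega
  rw [hf.dist_zero_eq hIH hjk] at h0
  rw [hf.dist_eq_sub hIH hj0 hj] at hk
  omega

lemma eq_of_adj_getVert (hf : IsInducedPath G k f) (hIH : G.InducedPathsGeodesicBelow k)
    (hp : p.length = G.dist (f 0) (f k)) (hpk : p.length < k) {i j : ℕ} (hi : 0 < i)
    (hip : i < p.length) (hj : j ≤ k) (h : G.Adj (p.getVert i) (f j)) :
    (2 ≤ j → i + 1 = p.length) ∧ (j + 2 ≤ k → i = 1) := by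
  have hx := fun j hj => hf.getVert_ne hIH hp hpk hi hip (j := j) hj
  have h0 := p.dist_getVert hp hip.le
  have hk := p.dist_getVert_right hp i
  constructor
  · intro hj2
    rcases hf.adj_last_or_le_dist_add_dist hIH hx hj2 hj h with h' | h'
    · rw [← dist_eq_one_iff_adj] at h'; omega
    · omega
  · intro hjk
    rcases hf.adj_first_or_le_dist_add_dist hIH hx hjk h with h' | h'
    · rw [← dist_eq_one_iff_adj, dist_comm] at h'; omega
    · omega

/-- The hole runs along `f` and back along the inner vertices of `p`; it starts at `f 1` rather
than `f 0` if `p.getVert 1` sees `f 1`, and symmetrically at the other end. -/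
lemma exists_hole (hf : IsInducedPath G k f) (hIH : G.InducedPathsGeodesicBelow k)
    (hp : p.length = G.dist (f 0) (f k)) (hpk : p.length < k) (hp3 : 3 ≤ p.length) :
    ∃ N, 5 ≤ N ∧ ContainsInduced (cycleGraph N) G := by
  have hq := p.isInducedPath_getVert hp
  obtain ⟨a, ha1, hfa, ha⟩ : ∃ a ≤ 1, G.Adj (f a) (p.getVert 1) ∧
      (a = 0 → ¬ G.Adj (f 1) (p.getVert 1)) := by
    by_cases h : G.Adj (f 1) (p.getVert 1)
    · exact ⟨1, le_rfl, h, by omega⟩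
    · exact ⟨0, zero_le_one, by simpa using hq.adj (i := 0) (by omega), fun _ => h⟩
  obtain ⟨b, hb1, hbk, hfb, hb⟩ : ∃ b, k - 1 ≤ b ∧ b ≤ k ∧
      G.Adj (f b) (p.getVert (p.length - 1)) ∧
      (b = k → ¬ G.Adj (f (k - 1)) (p.getVert (p.length - 1))) := by
    by_cases h : G.Adj (f (k - 1)) (p.getVert (p.length - 1))
    · exact ⟨k - 1, le_rfl, by omega, h, by omega⟩
    · refine ⟨k, by omega, le_rfl, ?_, fun _ => h⟩
      simpa [Nat.sub_add_cancel (show 1 ≤ p.length by omega)] using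
        (hq.adj (i := p.length - 1) (by omega)).symm
  refine ⟨(b - a) + (p.length - 2) + 2, by omega, ?_⟩
  refine (hf.comp_add (a := a) (m := b - a) (by omega)).containsInduced_cycleGraph
    (hq.reverse.comp_add (a := 1) (m := p.length - 2) (by omega))
    (fun i _ j _ h => hf.getVert_ne hIH hp hpk (by omega) (by omega) (by omega) h.symm)
    fun i j hi hj => ⟨fun h => ?_, ?_⟩
  · have hend := hf.eq_of_adj_getVert hIH hp hpk (i := p.length - (1 + j)) (j := a + i)
      (by omega) (by omega) (by omega) h.symm
    have h1 : a + i = 1 → p.length - (1 + j) = 1 → a ≠ 0 := fun e1 e2 ha0 =>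
      ha ha0 (by rwa [e1, e2] at h)
    have h2 : a + i = k - 1 → p.length - (1 + j) = p.length - 1 → b ≠ k := fun e1 e2 hbk =>
      hb hbk (by rwa [e1, e2] at h)
    omega
  · rintro (⟨rfl, rfl⟩ | ⟨rfl, rfl⟩)
    · simpa [Nat.add_sub_cancel' (show a ≤ b by omega)] using hfb
    · simpa [show p.length - (1 + (p.length - 2)) = 1 by omega] using hfa

lemma dist_mem_Icc (hf : IsInducedPath G k f) (hIH : G.InducedPathsGeodesicBelow k)
    (hk : 0 < k) : G.dist (f 0) (f k) ∈ Set.Icc (k - 2) k := by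
  have hlast := hf.adj (i := k - 1) (by omega)
  rw [Nat.sub_add_cancel hk] at hlast
  have := hlast.diff_dist_adj (u := f 0)
  rw [hf.dist_zero_eq hIH (j := k - 1) (by omega)] at this
  simp only [Set.mem_Icc]
  omega

lemma two_le_dist (hf : IsInducedPath G k f) (hk : 2 ≤ k) : 2 ≤ G.dist (f 0) (f k) := by
  have h0 : G.dist (f 0) (f k) ≠ 0 := dist_ne_zero_iff_ne_and_reachable.mpr
    ⟨hf.ne (Nat.zero_le k) le_rfl (by omega), hf.reachable le_rfl⟩
  have h1 : G.dist (f 0) (f k) ≠ 1 := by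
    rw [Ne, dist_eq_one_iff_adj, hf.adj_iff (Nat.zero_le k) le_rfl]
    omega
  omega

lemma length_ne_two (hG : HHDGFree G) (hf : IsInducedPath G k f)
    (hIH : G.InducedPathsGeodesicBelow k) (hp : p.length = G.dist (f 0) (f k))
    (hpk : p.length < k) (hkp : k ≤ p.length + 2) : p.length ≠ 2 := by
  intro hp2
  have hq := p.isInducedPath_getVert hp
  have hx : ∀ i ≤ k, p.getVert 1 ≠ f i := fun i hi =>
    hf.getVert_ne hIH hp hpk one_pos (by omega) hi
  have hx0 : G.Adj (p.getVert 1) (f 0) := by simpa using (hq.adj (i := 0) (by omega)).symm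
  have hxk : G.Adj (p.getVert 1) (f k) := by
    simpa [← hp2] using hq.adj (i := 1) (by omega)
  obtain rfl | rfl : k = 3 ∨ k = 4 := by omega
  · rcases hf.containsInduced_house_or_gem_or_cycleGraph_five hx hx0 hxk with h | h | h
    exacts [hG.1 h, hG.2.2.2 h, hG.2.1 5 le_rfl h]
  · have hx1 : ¬ G.Adj (p.getVert 1) (f 1) := fun h => by
      have := h.diff_dist_adj (u := f 4)
      rw [dist_comm, hf.dist_eq_sub hIH one_pos (by omega), dist_comm,
        p.dist_getVert_right hp] at this
      omega
    have hx3 : ¬ G.Adj (p.getVert 1) (f 3) := fun h => by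
      have := h.diff_dist_adj (u := f 0)
      rw [hf.dist_zero_eq hIH (by omega), p.dist_getVert hp (by omega)] at this
      omega
    rcases hf.containsInduced_domino_or_cycleGraph_six hx hx0 hx1 hx3 hxk with h | h
    exacts [hG.2.2.1 h, hG.2.1 6 (by norm_num) h]

lemma dist_eq_of_inducedPathsGeodesicBelow (hG : HHDGFree G) (hf : IsInducedPath G k f)
    (hIH : G.InducedPathsGeodesicBelow k) : G.dist (f 0) (f k) = k := by
  rcases Nat.lt_or_ge k 2 with hk | hk
  · interval_cases k
    · simp
    · exact dist_eq_one_iff_adj.mpr (hf.adj zero_lt_one)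
  obtain ⟨p, hp⟩ := (hf.reachable le_rfl).exists_walk_length_eq_dist
  have hbounds := hf.dist_mem_Icc hIH (by omega)
  have h2 := hf.two_le_dist hk
  rw [← hp, Set.mem_Icc] at hbounds
  rw [← hp] at h2 ⊢
  by_contra hpk
  rcases (show p.length = 2 ∨ 3 ≤ p.length by omega) with hp2 | hp3
  · exact hf.length_ne_two hG hIH hp (by omega) (by omega) hp2
  · obtain ⟨N, hN, h⟩ := hf.exists_hole hIH hp (by omega) hp3
    exact hG.2.1 N hN h

theorem dist_eq (hG : HHDGFree G) (hf : IsInducedPath G k f) : G.dist (f 0) (f k) = k := by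
  induction k using Nat.strong_induction_on generalizing f with
  | _ k ih => exact hf.dist_eq_of_inducedPathsGeodesicBelow hG fun m hm g hg => ih m hm hg

end IsInducedPath

end SimpleGraph

theorem HHDGFree_implies_distanceHereditary_general {V : Type*} (G : SimpleGraph V)
    (h1 : ¬ ContainsInduced house G) (h2 : ¬ ContainsInduced domino G)
    (h3 : ¬ ContainsInduced gem G)
    (h4 : ∀ n : ℕ, 5 ≤ n → ¬ ContainsInduced (SimpleGraph.cycleGraph n) G) :
    DistanceHereditary G := by
  intro S hS u v
  obtain ⟨p, hp⟩ := (hS.preconnected u v).exists_walk_length_eq_dist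
  rw [← hp]
  simpa using
    (((p.isInducedPath_getVert hp).map (Embedding.induce S)).dist_eq ⟨h1, h4, h2, h3⟩).symm

/-- (house, hole, domino, gem)-free ⟹ distance-hereditary. -/
theorem HHDGFree_implies_distanceHereditary {V : Type*} [Fintype V] (G : SimpleGraph V)
    (h1 : ¬ ContainsInduced house G) (h2 : ¬ ContainsInduced domino G)
    (h3 : ¬ ContainsInduced gem G)
    (h4 : ∀ n : ℕ, 5 ≤ n → ¬ ContainsInduced (SimpleGraph.cycleGraph n) G) :
    DistanceHereditary G :=
  HHDGFree_implies_distanceHereditary_general G h1 h2 h3 h4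
end

section
/- Let G be a finite simple graph and y a vertex of G such that either (a) y has exactly one neighbor in G (y is a pendant vertex), or (b) there exists a vertex x ≠ y with N_G[x] = N_G[y] (x and y are true twins), or (c) there exists a vertex x ≠ y with N_G(x) = N_G(y) (x and y are false twins). If the induced subgraph of G on V(G) \ {y} is distance-hereditary, then G is distance-hereditary. (This is the inductive step of direction (ii) ⇒ (i) of the Bandelt–Mulder characterization, Theorem 1: graphs obtained from a single vertex by repeatedly adding pendant vertices, true twins, and false twins are distance-hereditary.) -/
open SimpleGraph

/-!
Let `x ≠ y` be such that every neighbour of `y` is `x` or a neighbour of `x`; a pendant vertex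
and both kinds of twins have such an `x`. Replacing `y` by `x` turns every walk into a walk that
is no longer and avoids `y`, so distances in `G - y` are those of `G`, and a connected vertex set
`S ∋ y` is sent to a connected set `T` avoiding `y`, in which shortest walks exist by hypothesis.
If `x ∉ S` (possible only for twins), these are pulled back into `S` by replacing `x` by `y`.
Geodesics starting at `y` pass through `x` when `y` is pendant, and are images of geodesics
starting at `x` when `x` and `y` are twins.
-/

namespace SimpleGraph

variable {V W : Type*} {G : SimpleGraph V} {H : SimpleGraph W}

def IsWeakHom (G : SimpleGraph V) (H : SimpleGraph W) (f : V → W) : Prop :=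
  ∀ ⦃a b : V⦄, G.Adj a b → f a = f b ∨ H.Adj (f a) (f b)

def HasGeodesicIn (G : SimpleGraph V) (S : Set V) (u v : V) : Prop :=
  ∃ p : G.Walk u v, p.length ≤ G.dist u v ∧ ∀ w ∈ p.support, w ∈ S

def IsIsometricSet (G : SimpleGraph V) (S : Set V) : Prop :=
  ∀ ⦃u⦄, u ∈ S → ∀ ⦃v⦄, v ∈ S → G.HasGeodesicIn S u v

lemma HasGeodesicIn.symm {S : Set V} {u v : V} (h : G.HasGeodesicIn S u v) :
    G.HasGeodesicIn S v u := by
  obtain ⟨p, hp, hpS⟩ := h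
  exact ⟨p.reverse, by simpa [dist_comm] using hp, by simpa using hpS⟩

lemma Walk.length_induce {S : Set V} {u v : V} (p : G.Walk u v)
    (hp : ∀ w ∈ p.support, w ∈ S) : (p.induce S hp).length = p.length := by
  have h := congrArg Walk.length (p.map_induce hp)
  rwa [Walk.length_map] at h

lemma Reachable.of_induce {S : Set V} {u v : S} (h : (G.induce S).Reachable u v) :
    G.Reachable u v :=
  h.map (Embedding.induce S).toHom

lemma Walk.exists_of_induce {S : Set V} {u v : S} (q : (G.induce S).Walk u v) :
    ∃ p : G.Walk u v,
      p.length = q.length ∧ ∀ w ∈ p.support, ∃ z ∈ q.support, z.1 = w := by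
  refine ⟨q.map (Embedding.induce S).toHom, Walk.length_map _ _, fun w hw => ?_⟩
  replace hw : w ∈ (q.map (Embedding.induce S).toHom).support := hw
  rwa [Walk.support_map, List.mem_map] at hw

lemma dist_le_induce_dist {S : Set V} {u v : S} (h : (G.induce S).Reachable u v) :
    G.dist u v ≤ (G.induce S).dist u v := by
  obtain ⟨q, hq⟩ := h.exists_walk_length_eq_dist
  obtain ⟨p, hp, -⟩ := q.exists_of_induce
  exact hq ▸ hp ▸ dist_le p

lemma exists_adj_mem_of_connected_induce {S : Set V} (hS : (G.induce S).Connected) {u v : V}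
    (hu : u ∈ S) (hv : v ∈ S) (huv : u ≠ v) : ∃ b ∈ S, G.Adj u b := by
  obtain ⟨w⟩ := hS.preconnected ⟨u, hu⟩ ⟨v, hv⟩
  exact ⟨w.snd, w.snd.2, w.adj_snd (w.not_nil_of_ne (by simpa using huv))⟩

lemma isIsometricSet_iff_induce_dist {S : Set V} (hS : (G.induce S).Connected) :
    G.IsIsometricSet S ↔ ∀ u v : S, (G.induce S).dist u v = G.dist u v := by
  constructor
  · rintro h u v
    obtain ⟨p, hp, hpS⟩ := h u.2 v.2
    refine le_antisymm ?_ (dist_le_induce_dist (hS.preconnected u v))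
    calc (G.induce S).dist u v ≤ (p.induce S hpS).length := dist_le _
      _ = p.length := p.length_induce hpS
      _ ≤ G.dist u v := hp
  · intro h u hu v hv
    obtain ⟨q, hq⟩ := (hS.preconnected ⟨u, hu⟩ ⟨v, hv⟩).exists_walk_length_eq_dist
    obtain ⟨p, hp, hpS⟩ := q.exists_of_induce
    refine ⟨p, by rw [hp, hq, h], fun w hw => ?_⟩
    obtain ⟨z, -, rfl⟩ := hpS w hw
    exact z.2

namespace IsWeakHom

variable {f : V → W}

lemma exists_walk (hf : IsWeakHom G H f) {S : Set V} {u v : V} (p : G.Walk u v)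
    (hp : ∀ w ∈ p.support, w ∈ S) :
    ∃ q : H.Walk (f u) (f v), q.length ≤ p.length ∧ ∀ w ∈ q.support, w ∈ f '' S := by
  induction p with
  | nil => exact ⟨.nil, le_rfl, by simpa using ⟨_, hp _ (by simp), rfl⟩⟩
  | @cons a b c hab p ih =>
    obtain ⟨q, hq, hqS⟩ := ih fun w hw => hp w (List.mem_cons_of_mem _ hw)
    have ha : f a ∈ f '' S := ⟨a, hp a (by simp), rfl⟩
    rcases hf hab with heq | hadj
    · exact ⟨q.copy heq.symm rfl, by simp; omega, by simpa using hqS⟩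
    · exact ⟨.cons hadj q, by simpa using hq, by simpa using ⟨ha, hqS⟩⟩

lemma dist_le (hf : IsWeakHom G H f) {u v : V} (h : G.Reachable u v) :
    H.dist (f u) (f v) ≤ G.dist u v := by
  obtain ⟨p, hp⟩ := h.exists_walk_length_eq_dist
  obtain ⟨q, hq, -⟩ := hf.exists_walk (S := Set.univ) p (by simp)
  exact (SimpleGraph.dist_le q).trans (hp ▸ hq)

lemma connected_induce_image (hf : IsWeakHom G H f) {S : Set V} (hS : (G.induce S).Connected) :
    (H.induce (f '' S)).Connected := by
  obtain ⟨⟨u, hu⟩⟩ := hS.nonempty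
  have : Nonempty (f '' S) := ⟨⟨f u, u, hu, rfl⟩⟩
  refine ⟨?_⟩
  rintro ⟨_, a, ha, rfl⟩ ⟨_, b, hb, rfl⟩
  obtain ⟨p, -, hpS⟩ := (hS.preconnected ⟨a, ha⟩ ⟨b, hb⟩).some.exists_of_induce
  obtain ⟨q, -, hqS⟩ := hf.exists_walk p fun w hw => by
    obtain ⟨z, -, rfl⟩ := hpS w hw
    exact z.2
  exact (q.induce _ hqS).reachable

end IsWeakHom

lemma isWeakHom_update_id [DecidableEq V] {x y : V}
    (h : G.neighborSet y ⊆ insert x (G.neighborSet x)) :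
    IsWeakHom G G (Function.update id y x) := by
  intro a b hab
  by_cases ha : a = y
  · subst ha
    simpa [Function.update_of_ne hab.ne', eq_comm] using h hab
  by_cases hb : b = y
  · subst hb
    simpa [Function.update_of_ne ha, adj_comm] using h hab.symm
  · simp [Function.update_of_ne ha, Function.update_of_ne hb, hab]

lemma distanceHereditary_iff :
    DistanceHereditary G ↔ ∀ S : Set V, (G.induce S).Connected → G.IsIsometricSet S :=
  forall_congr' fun _ => forall_congr' fun hS => (isIsometricSet_iff_induce_dist hS).symm

lemma connected_induce_preimage_val {C S : Set V} (hSC : S ⊆ C) (hS : (G.induce S).Connected) :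
    ((G.induce C).induce (Subtype.val ⁻¹' S)).Connected :=
  hS.map ⟨fun z => ⟨⟨z.1, hSC z.2⟩, z.2⟩, id⟩ fun z => ⟨⟨z.1.1, z.2⟩, rfl⟩

lemma image_update_id_subset [DecidableEq V] {a b : V} {S : Set V} (hb : b ∈ S) :
    Function.update id a b '' S ⊆ S := by
  rintro _ ⟨z, hz, rfl⟩
  rw [Function.update_apply]
  split_ifs
  exacts [hb, hz]

section DominatedVertex

variable {x y : V}

lemma update_id_ne [DecidableEq V] (hxy : x ≠ y) (z : V) : Function.update id y x z ≠ y := by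
  rw [Function.update_apply]
  split_ifs with hz
  exacts [hxy, hz]

lemma image_update_id_image_update_id_subset [DecidableEq V] {S : Set V} (hy : y ∈ S) :
    Function.update id x y '' (Function.update id y x '' S) ⊆ S := by
  rintro _ ⟨_, ⟨z, hz, rfl⟩, rfl⟩
  by_cases hzy : z = y
  · simpa [hzy] using hy
  · rw [Function.update_of_ne hzy]
    exact image_update_id_subset hy ⟨z, hz, rfl⟩

lemma dist_induce_compl_singleton_le (hxy : x ≠ y)
    (hN : G.neighborSet y ⊆ insert x (G.neighborSet x)) {u v : V} (hu : u ≠ y) (hv : v ≠ y)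
    (h : G.Reachable u v) : (G.induce {y}ᶜ).dist ⟨u, hu⟩ ⟨v, hv⟩ ≤ G.dist u v := by
  classical
  obtain ⟨p, hp⟩ := h.exists_walk_length_eq_dist
  obtain ⟨q, hq, hqS⟩ := (isWeakHom_update_id hN).exists_walk (S := Set.univ) p (by simp)
  let q' : G.Walk u v := q.copy (Function.update_of_ne hu _ _) (Function.update_of_ne hv _ _)
  have hq'S : ∀ w ∈ q'.support, w ∈ ({y}ᶜ : Set V) := fun w hw => by
    obtain ⟨z, -, rfl⟩ := hqS w (by simpa [q'] using hw)
    exact update_id_ne hxy z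
  calc (G.induce {y}ᶜ).dist ⟨u, hu⟩ ⟨v, hv⟩ ≤ (q'.induce _ hq'S).length := dist_le _
    _ = q.length := by rw [q'.length_induce, Walk.length_copy]
    _ ≤ G.dist u v := hp ▸ hq

lemma isIsometricSet_of_notMem (hxy : x ≠ y)
    (hN : G.neighborSet y ⊆ insert x (G.neighborSet x))
    (hDH : DistanceHereditary (G.induce {y}ᶜ)) {S : Set V} (hyS : y ∉ S)
    (hS : (G.induce S).Connected) : G.IsIsometricSet S := by
  intro u hu v hv
  have hSC : S ⊆ {y}ᶜ := fun z hz => ne_of_mem_of_not_mem hz hyS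
  obtain ⟨q, hq, hqS⟩ := distanceHereditary_iff.mp hDH _ (connected_induce_preimage_val hSC hS)
    (u := ⟨u, hSC hu⟩) hu (v := ⟨v, hSC hv⟩) hv
  obtain ⟨p, hp, hpS⟩ := q.exists_of_induce
  refine ⟨p, ?_, fun w hw => ?_⟩
  · calc p.length = q.length := hp
      _ ≤ (G.induce {y}ᶜ).dist _ _ := hq
      _ ≤ G.dist u v := dist_induce_compl_singleton_le hxy hN _ _
          (Reachable.of_induce (hS.preconnected ⟨u, hu⟩ ⟨v, hv⟩))
  · obtain ⟨z, hz, rfl⟩ := hpS w hw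
    exact hqS z hz

lemma isIsometricSet_image_update_id [DecidableEq V] (hxy : x ≠ y)
    (hN : G.neighborSet y ⊆ insert x (G.neighborSet x))
    (hDH : DistanceHereditary (G.induce {y}ᶜ)) {S : Set V} (hS : (G.induce S).Connected) :
    G.IsIsometricSet (Function.update id y x '' S) :=
  isIsometricSet_of_notMem hxy hN hDH (fun ⟨z, _, hz⟩ => update_id_ne hxy z hz)
    ((isWeakHom_update_id hN).connected_induce_image hS)

lemma hasGeodesicIn_of_ne (hxy : x ≠ y)
    (hN : G.neighborSet y ⊆ insert x (G.neighborSet x))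
    (hDH : DistanceHereditary (G.induce {y}ᶜ)) {S : Set V} (hS : (G.induce S).Connected)
    (hyS : y ∈ S) (hx : x ∈ S ∨ G.neighborSet x ⊆ insert y (G.neighborSet y))
    {u v : V} (hu : u ∈ S) (hv : v ∈ S) (huy : u ≠ y) (hvy : v ≠ y) :
    G.HasGeodesicIn S u v := by
  classical
  obtain ⟨p, hp, hpT⟩ := isIsometricSet_image_update_id hxy hN hDH hS
    ⟨u, hu, Function.update_of_ne huy _ _⟩ ⟨v, hv, Function.update_of_ne hvy _ _⟩
  by_cases hxS : x ∈ S
  · exact ⟨p, hp, fun w hw => image_update_id_subset hxS (hpT w hw)⟩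
  obtain ⟨q, hq, hqS⟩ := (isWeakHom_update_id (hx.resolve_left hxS)).exists_walk p hpT
  refine ⟨q.copy (Function.update_of_ne (ne_of_mem_of_not_mem hu hxS) _ _)
    (Function.update_of_ne (ne_of_mem_of_not_mem hv hxS) _ _), by simpa using hq.trans hp,
    fun w hw => image_update_id_image_update_id_subset hyS (hqS w (by simpa using hw))⟩

lemma dist_add_one_le_of_neighborSet_eq_singleton (hN : G.neighborSet y = {x}) {v : V}
    (hvy : v ≠ y) (h : G.Reachable y v) : G.dist x v + 1 ≤ G.dist y v := by
  obtain ⟨p, hp⟩ := h.exists_walk_length_eq_dist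
  cases p with
  | nil => exact absurd rfl hvy
  | cons hadj p =>
    obtain rfl : _ = x := by simpa [← mem_neighborSet, hN] using hadj
    rw [← hp, Walk.length_cons]
    exact Nat.add_le_add_right (dist_le p) 1

lemma mem_of_neighborSet_eq_singleton (hN : G.neighborSet y = {x}) {S : Set V}
    (hS : (G.induce S).Connected) (hyS : y ∈ S) {v : V} (hv : v ∈ S) (hvy : v ≠ y) :
    x ∈ S := by
  obtain ⟨b, hbS, hyb⟩ := exists_adj_mem_of_connected_induce hS hyS hv hvy.symm
  obtain rfl : b = x := by simpa [← mem_neighborSet, hN] using hyb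
  exact hbS

lemma hasGeodesicIn_of_neighborSet_eq_singleton (hxy : x ≠ y) (hN : G.neighborSet y = {x})
    (hDH : DistanceHereditary (G.induce {y}ᶜ)) {S : Set V} (hS : (G.induce S).Connected)
    (hyS : y ∈ S) {v : V} (hv : v ∈ S) (hvy : v ≠ y) : G.HasGeodesicIn S y v := by
  have hxS := mem_of_neighborSet_eq_singleton hN hS hyS hv hvy
  have hyx : G.Adj y x := by simp [← mem_neighborSet, hN]
  obtain ⟨p, hp, hpS⟩ :=
    hasGeodesicIn_of_ne hxy (by simp [hN]) hDH hS hyS (.inl hxS) hxS hv hxy hvy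
  refine ⟨.cons hyx p, ?_, by simpa [hyS] using hpS⟩
  calc (Walk.cons hyx p).length = p.length + 1 := Walk.length_cons _ _
    _ ≤ G.dist x v + 1 := Nat.add_le_add_right hp 1
    _ ≤ G.dist y v :=
      dist_add_one_le_of_neighborSet_eq_singleton hN hvy (Walk.cons hyx p).reachable

lemma hasGeodesicIn_of_neighborSet_subset (hxy : x ≠ y)
    (hN : G.neighborSet y ⊆ insert x (G.neighborSet x)) {S : Set V}
    (hS : (G.induce S).Connected) (hyS : y ∈ S) (hxS : x ∈ S) : G.HasGeodesicIn S y x := by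
  have hreach := Reachable.of_induce (hS.preconnected ⟨y, hyS⟩ ⟨x, hxS⟩)
  by_cases hyx : G.Adj y x
  · exact ⟨.cons hyx .nil, by simpa using (hreach.pos_dist_of_ne hxy.symm).nat_succ_le,
      by simp [hyS, hxS]⟩
  obtain ⟨b, hbS, hyb⟩ := exists_adj_mem_of_connected_induce hS hyS hxS hxy.symm
  have hbx : G.Adj b x := ((hN hyb).resolve_left (by rintro rfl; exact hyx hyb)).symm
  exact ⟨.cons hyb (.cons hbx .nil),
    by simpa using (hreach.one_lt_dist_of_ne_of_not_adj hxy.symm hyx).nat_succ_le,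
    by simp [hyS, hbS, hxS]⟩

lemma hasGeodesicIn_of_twin (hxy : x ≠ y) (hN : G.neighborSet y ⊆ insert x (G.neighborSet x))
    (hN' : G.neighborSet x ⊆ insert y (G.neighborSet y))
    (hDH : DistanceHereditary (G.induce {y}ᶜ)) {S : Set V} (hS : (G.induce S).Connected)
    (hyS : y ∈ S) {v : V} (hv : v ∈ S) (hvy : v ≠ y) :
    G.HasGeodesicIn S y v := by
  classical
  by_cases hvx : v = x
  · exact hvx ▸ hasGeodesicIn_of_neighborSet_subset hxy hN hS hyS (hvx ▸ hv)
  obtain ⟨p, hp, hpT⟩ :=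
    isIsometricSet_image_update_id hxy hN hDH hS ⟨y, hyS, rfl⟩ ⟨v, hv, rfl⟩
  obtain ⟨q, hq, hqS⟩ := (isWeakHom_update_id hN').exists_walk p hpT
  refine ⟨q.copy (by simp) (by simp [hvy, hvx]), ?_,
    fun w hw => image_update_id_image_update_id_subset hyS (hqS w (by simpa using hw))⟩
  calc (q.copy _ _).length = q.length := Walk.length_copy _ _ _
    _ ≤ G.dist (Function.update id y x y) (Function.update id y x v) := hq.trans hp
    _ ≤ G.dist y v := (isWeakHom_update_id hN).dist_le
        (Reachable.of_induce (hS.preconnected ⟨y, hyS⟩ ⟨v, hv⟩))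

theorem DistanceHereditary.of_induce_compl_singleton (hxy : x ≠ y)
    (hN : G.neighborSet y ⊆ insert x (G.neighborSet x))
    (hx : G.neighborSet y = {x} ∨ G.neighborSet x ⊆ insert y (G.neighborSet y))
    (hDH : DistanceHereditary (G.induce {y}ᶜ)) : DistanceHereditary G := by
  refine distanceHereditary_iff.mpr fun S hS => ?_
  by_cases hyS : y ∉ S
  · exact isIsometricSet_of_notMem hxy hN hDH hyS hS
  rw [not_not] at hyS
  have from_y : ∀ v ∈ S, v ≠ y → G.HasGeodesicIn S y v := fun v hv hvy => hx.elim
    (fun h => hasGeodesicIn_of_neighborSet_eq_singleton hxy h hDH hS hyS hv hvy)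
    (fun h => hasGeodesicIn_of_twin hxy hN h hDH hS hyS hv hvy)
  intro u hu v hv
  obtain rfl | huy := eq_or_ne u y
  · obtain rfl | hvu := eq_or_ne v u
    · exact ⟨.nil, by simp, by simpa using hu⟩
    · exact from_y v hv hvu
  obtain rfl | hvy := eq_or_ne v y
  · exact (from_y u hu huy).symm
  have hxS : x ∈ S ∨ G.neighborSet x ⊆ insert y (G.neighborSet y) :=
    hx.imp_left fun h => mem_of_neighborSet_eq_singleton h hS hyS hu huy
  exact hasGeodesicIn_of_ne hxy hN hDH hS hyS hxS hu hv huy hvy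

end DominatedVertex

end SimpleGraph

theorem distanceHereditary_of_add_pendant_or_twin_general {V : Type*}
    (G : SimpleGraph V) (y : V)
    (hy : (∃ w : V, G.neighborSet y = {w}) ∨
      (∃ x : V, x ≠ y ∧ insert x (G.neighborSet x) = insert y (G.neighborSet y)) ∨
      (∃ x : V, x ≠ y ∧ G.neighborSet x = G.neighborSet y))
    (hDH : DistanceHereditary (G.induce {y}ᶜ)) :
    DistanceHereditary G := by
  obtain ⟨x, hxy, hN, hx⟩ : ∃ x, x ≠ y ∧
      G.neighborSet y ⊆ insert x (G.neighborSet x) ∧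
      (G.neighborSet y = {x} ∨ G.neighborSet x ⊆ insert y (G.neighborSet y)) := by
    rcases hy with ⟨x, hx⟩ | ⟨x, hxy, hN⟩ | ⟨x, hxy, hN⟩
    · have hyx : G.Adj y x := by simp [← mem_neighborSet, hx]
      exact ⟨x, hyx.ne', by simp [hx], .inl hx⟩
    · exact ⟨x, hxy, (Set.subset_insert _ _).trans hN.ge,
        .inr ((Set.subset_insert _ _).trans hN.le)⟩
    · exact ⟨x, hxy, hN ▸ Set.subset_insert _ _, .inr (hN ▸ Set.subset_insert _ _)⟩
  exact DistanceHereditary.of_induce_compl_singleton hxy hN hx hDH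

/-- adding a pendant vertex, a true twin, or a false twin to a
distance-hereditary graph yields a distance-hereditary graph. -/
theorem distanceHereditary_of_add_pendant_or_twin {V : Type*} [Fintype V]
    (G : SimpleGraph V) (y : V)
    (hy : (∃ w : V, G.neighborSet y = {w}) ∨
      (∃ x : V, x ≠ y ∧ insert x (G.neighborSet x) = insert y (G.neighborSet y)) ∨
      (∃ x : V, x ≠ y ∧ G.neighborSet x = G.neighborSet y))
    (hDH : DistanceHereditary (G.induce {y}ᶜ)) :
    DistanceHereditary G :=
  distanceHereditary_of_add_pendant_or_twin_general G y hy hDH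
end

section
/- Every finite connected distance-hereditary graph G with at least two vertices contains a vertex y such that either y has exactly one neighbor in G (y is a pendant vertex), or there exists a vertex x ≠ y with N_G[x] = N_G[y] (a true twin of y), or there exists a vertex x ≠ y with N_G(x) = N_G(y) (a false twin of y). (This is the key step of direction (i) ⇒ (ii) of the Bandelt–Mulder characterization, Theorem 1: every distance-hereditary graph can be generated from a single vertex by repeatedly adding a pendant vertex, a false twin, or a true twin.) -/
open SimpleGraph

/-!
Fix a vertex `u` and sort the vertices into levels by their distance from `u`. In a
distance-hereditary graph, a vertex `z` adjacent to a vertex `x` one level up is adjacent to every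
vertex on the level of `x` that is joined to `x` above the level of `z`: otherwise, in the
subgraph induced by a geodesic from `u` to `z` followed by such a detour, that vertex would be
farther from `u` than in `G`. Applied from an end of an induced `P₄`, this shows that the ends are
at distance three, so a set of vertices with a common neighbour induces a cograph, and cographs
have twins. If the farthest level has an edge, the component of that edge in the level is such a
set, and its twins are twins in `G` because all its vertices have the same neighbours one level
down. Otherwise a farthest vertex with fewest neighbours is pendant, has a false twin, or its
neighbourhood is such a set whose vertices see the same vertices outside it.
-/

namespace SimpleGraph

variable {V : Type*} {G : SimpleGraph V}

/-- True or false twins, according to whether `x` and `y` are adjacent. -/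
def Twins (G : SimpleGraph V) (x y : V) : Prop :=
  ∀ t, t ≠ x → t ≠ y → (G.Adj x t ↔ G.Adj y t)

lemma induce_compl (s : Set V) : Gᶜ.induce s = (G.induce s)ᶜ := by
  ext a b
  simp [Subtype.ext_iff]

lemma twins_compl {x y : V} : Gᶜ.Twins x y ↔ G.Twins x y := by
  refine forall_congr' fun t => imp_congr_right fun htx => imp_congr_right fun hty => ?_
  simp [compl_adj, htx.symm, hty.symm, not_iff_not]

lemma Twins.of_induce {s : Set V} {x y : s} (h : (G.induce s).Twins x y)
    (hout : ∀ t ∉ s, G.Adj x t ↔ G.Adj y t) : G.Twins x y := by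
  intro t htx hty
  by_cases ht : t ∈ s
  · exact h ⟨t, ht⟩ (fun e => htx (congrArg Subtype.val e)) fun e => hty (congrArg Subtype.val e)
  · exact hout t ht

lemma twins_of_neighborSet_eq {x y : V} (h : G.neighborSet x = G.neighborSet y) :
    G.Twins x y :=
  fun t _ _ => Set.ext_iff.mp h t

lemma Twins.neighborSet_eq {x y : V} (h : G.Twins x y) (hxy : ¬G.Adj x y) :
    G.neighborSet x = G.neighborSet y := by
  ext t
  by_cases htx : t = x
  · subst htx
    simpa using fun h : G.Adj y t => hxy h.symm
  by_cases hty : t = y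
  · subst hty
    simpa using hxy
  exact h t htx hty

lemma Twins.insert_neighborSet_eq {x y : V} (h : G.Twins x y) (hxy : G.Adj x y) :
    insert x (G.neighborSet x) = insert y (G.neighborSet y) := by
  ext t
  by_cases htx : t = x
  · subst htx
    simp [hxy.symm]
  by_cases hty : t = y
  · subst hty
    simp [hxy]
  simp [htx, hty, h t htx hty]

def IsInducedP4 (G : SimpleGraph V) (a b c d : V) : Prop :=
  G.Adj a b ∧ G.Adj b c ∧ G.Adj c d ∧ ¬G.Adj a c ∧ ¬G.Adj a d ∧ ¬G.Adj b d

def P4Free (G : SimpleGraph V) : Prop :=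
  ∀ a b c d, ¬G.IsInducedP4 a b c d

lemma IsInducedP4.of_induce {s : Set V} {a b c d : s} (h : (G.induce s).IsInducedP4 a b c d) :
    G.IsInducedP4 a b c d :=
  h

/-- The path on four vertices is self-complementary. -/
lemma IsInducedP4.of_compl {a b c d : V} (h : Gᶜ.IsInducedP4 a b c d) :
    G.IsInducedP4 b d a c := by
  obtain ⟨hab, hbc, hcd, hac, had, hbd⟩ := h
  have hbd' : b ≠ d := by rintro rfl; exact had hab
  have had' : a ≠ d := by rintro rfl; exact hac hcd.symm
  have hac' : a ≠ c := by rintro rfl; exact had hcd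
  simp only [compl_adj, not_and, not_not] at *
  exact ⟨hbd hbd', (had had').symm, hac hac', fun h => hab.2 h.symm, hbc.2, fun h => hcd.2 h.symm⟩

lemma P4Free.induce (h : G.P4Free) (s : Set V) : (G.induce s).P4Free :=
  fun _ _ _ _ hP => h _ _ _ _ hP.of_induce

lemma Connected.exists_adj_reachable_induce_compl_singleton (hG : G.Connected) {v a : V}
    (ha : a ≠ v) :
    ∃ x, ∃ hx : x ≠ v, G.Adj x v ∧ (G.induce {v}ᶜ).Reachable ⟨a, ha⟩ ⟨x, hx⟩ := by
  suffices ∀ {a b : V} (p : G.Walk a b), b = v → ∀ ha : a ≠ v,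
      ∃ x, ∃ hx : x ≠ v, G.Adj x v ∧ (G.induce {v}ᶜ).Reachable ⟨a, ha⟩ ⟨x, hx⟩ from
    this (hG.preconnected a v).some rfl ha
  intro a b p hb
  induction p with
  | nil => exact fun ha => absurd hb ha
  | @cons a b _ hab q ih =>
    intro ha
    by_cases hb' : b = v
    · subst hb'
      exact ⟨a, ha, hab, .rfl⟩
    · obtain ⟨x, hx, hxv, hbx⟩ := ih hb hb'
      exact ⟨x, hx, hxv, (show (G.induce {v}ᶜ).Adj ⟨a, ha⟩ ⟨b, hb'⟩ from hab).reachable.trans hbx⟩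

/-- The `P₄` is a neighbour of `v` outside the component of `w` in `G - v`, then `v`, then an edge
of that component leaving `N(v)`. -/
lemma Connected.exists_isInducedP4_of_not_preconnected_induce (hG : G.Connected) {v w : V}
    (hwv : w ≠ v) (hvw : ¬G.Adj v w) (h : ¬(G.induce {v}ᶜ).Preconnected) :
    ∃ a b c d, G.IsInducedP4 a b c d := by
  classical
  set H := G.induce {v}ᶜ
  obtain ⟨a, b, hab⟩ : ∃ a b, ¬H.Reachable a b := by simpa [Preconnected] using h
  obtain ⟨α, hαv, hα, hwα⟩ : ∃ α, ∃ hαv : α ≠ v, G.Adj α v ∧ ¬H.Reachable ⟨w, hwv⟩ ⟨α, hαv⟩ := by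
    obtain ⟨xa, hxa, hxav, hra⟩ := hG.exists_adj_reachable_induce_compl_singleton a.2
    obtain ⟨xb, hxb, hxbv, hrb⟩ := hG.exists_adj_reachable_induce_compl_singleton b.2
    by_cases hwa : H.Reachable ⟨w, hwv⟩ ⟨xa, hxa⟩
    · exact ⟨xb, hxb, hxbv, fun hwb => hab (hra.trans (hwa.symm.trans (hwb.trans hrb.symm)))⟩
    · exact ⟨xa, hxa, hxav, hwa⟩
  obtain ⟨x, hxv, hx, ⟨q⟩⟩ := hG.exists_adj_reachable_induce_compl_singleton hwv
  obtain ⟨d, hd, hdt, hds⟩ :=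
    q.exists_boundary_dart {t | ¬G.Adj v t} hvw (by simpa using hx.symm)
  have hrt : H.Reachable ⟨w, hwv⟩ d.fst := ⟨q.takeUntil _ (q.dart_fst_mem_support_of_mem_darts hd)⟩
  have hrs : H.Reachable ⟨w, hwv⟩ d.snd := hrt.trans d.adj.reachable
  refine ⟨α, v, d.snd, d.fst, hα, by simpa using hds, d.adj.symm, ?_, ?_, hdt⟩
  · exact fun hαs => hwα (hrs.trans (show H.Adj d.snd ⟨α, hαv⟩ from hαs.symm).reachable)
  · exact fun hαt => hwα (hrt.trans (show H.Adj d.fst ⟨α, hαv⟩ from hαt.symm).reachable)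

/-- Seinsche's theorem. If `G - v` or its complement is disconnected, the previous lemma applies to
`G` or to `Gᶜ`; otherwise induct. -/
theorem Connected.exists_isInducedP4_of_connected_compl [Finite V] [Nontrivial V]
    (hG : G.Connected) (hGc : Gᶜ.Connected) : ∃ a b c d, G.IsInducedP4 a b c d := by
  induction h : Nat.card V using Nat.strong_induction_on generalizing V with | _ n ih
  obtain ⟨v⟩ := hG.nonempty
  obtain ⟨w, hvw⟩ := hG.preconnected.exists_adj_of_nontrivial v
  obtain ⟨w', hvw'⟩ := hGc.preconnected.exists_adj_of_nontrivial v
  by_cases hG' : (G.induce {v}ᶜ).Preconnected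
  · by_cases hGc' : (Gᶜ.induce {v}ᶜ).Preconnected
    · have : Nontrivial ({v}ᶜ : Set V) :=
        ⟨⟨w, hvw.ne'⟩, ⟨w', hvw'.ne'⟩, fun e => by
          obtain rfl : w = w' := congrArg Subtype.val e
          exact hvw'.2 hvw⟩
      have hlt : Nat.card ({v}ᶜ : Set V) < n := h ▸ Finite.card_subtype_lt (x := v) (by simp)
      obtain ⟨a, b, c, d, hP⟩ := ih _ hlt (G := G.induce {v}ᶜ) (Connected.mk hG')
        (by rw [← induce_compl]; exact Connected.mk hGc') rfl
      exact ⟨a, b, c, d, hP.of_induce⟩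
    · obtain ⟨a, b, c, d, hP⟩ := hGc.exists_isInducedP4_of_not_preconnected_induce hvw.ne'
        (fun h => h.2 hvw) hGc'
      exact ⟨b, d, a, c, hP.of_compl⟩
  · exact hG.exists_isInducedP4_of_not_preconnected_induce hvw'.ne' hvw'.2 hG'

lemma exists_twins_of_not_preconnected (h : ¬G.Preconnected)
    (hind : ∀ s : Set V, s ≠ Set.univ → Nontrivial s → ∃ x y : s, x ≠ y ∧ (G.induce s).Twins x y) :
    ∃ x y, x ≠ y ∧ G.Twins x y := by
  by_cases hcomp : ∃ x y, x ≠ y ∧ G.Reachable x y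
  · obtain ⟨x, y, hxy, hr⟩ := hcomp
    set s := {t | G.Reachable x t}
    have hs : s ≠ Set.univ := fun hs =>
      h fun a b => (show a ∈ s from hs ▸ trivial).symm.trans (show b ∈ s from hs ▸ trivial)
    have : Nontrivial s := ⟨⟨x, .rfl⟩, ⟨y, hr⟩, fun e => hxy (congrArg Subtype.val e)⟩
    obtain ⟨p, q, hpq, htw⟩ := hind s hs this
    refine ⟨p, q, Subtype.coe_injective.ne hpq, htw.of_induce fun t ht => ?_⟩
    exact iff_of_false (fun hpt => ht (p.2.trans hpt.reachable))
      (fun hqt => ht (q.2.trans hqt.reachable))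
  · push Not at hcomp
    obtain ⟨x, y, hxy⟩ : ∃ x y, ¬G.Reachable x y := by simpa [Preconnected] using h
    refine ⟨x, y, fun e => hxy (e ▸ .rfl), fun t htx hty => iff_of_false ?_ ?_⟩
    · exact fun hxt => hcomp x t htx.symm hxt.reachable
    · exact fun hyt => hcomp y t hty.symm hyt.reachable

/-- A cograph or its complement is disconnected, and twins inside a component are twins of the
whole graph. -/
theorem P4Free.exists_twins [Finite V] [Nontrivial V] (hG : G.P4Free) :
    ∃ x y, x ≠ y ∧ G.Twins x y := by
  induction h : Nat.card V using Nat.strong_induction_on generalizing V with | _ n ih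
  have hind : ∀ s : Set V, s ≠ Set.univ → Nontrivial s →
      ∃ x y : s, x ≠ y ∧ (G.induce s).Twins x y := by
    intro s hs _
    obtain ⟨v, hv⟩ := (Set.ne_univ_iff_exists_notMem s).mp hs
    exact ih _ (h ▸ Finite.card_subtype_lt hv) (hG.induce s) rfl
  by_cases hc : G.Preconnected
  · by_cases hcc : Gᶜ.Preconnected
    · obtain ⟨a, b, c, d, hP⟩ := (Connected.mk hc).exists_isInducedP4_of_connected_compl
        (Connected.mk hcc)
      exact absurd hP (hG a b c d)
    · obtain ⟨x, y, hxy, htw⟩ := exists_twins_of_not_preconnected hcc fun s hs hnt => by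
        obtain ⟨x, y, hxy, htw⟩ := hind s hs hnt
        exact ⟨x, y, hxy, by rwa [induce_compl, twins_compl]⟩
      exact ⟨x, y, hxy, twins_compl.mp htw⟩
  · exact exists_twins_of_not_preconnected hc hind

lemma Reachable.le_add_dist {f : V → ℕ} (hf : ∀ a b, G.Adj a b → f b ≤ f a + 1) {a b : V}
    (h : G.Reachable a b) : f b ≤ f a + G.dist a b := by
  obtain ⟨p, hp⟩ := h.exists_walk_length_eq_dist
  rw [← hp]
  clear hp h
  induction p with
  | nil => simp
  | cons hadj q ih =>
    have := hf _ _ hadj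
    rw [Walk.length_cons]
    omega

lemma Walk.dist_add_dist_le_length {u v a : V} (p : G.Walk u v) (ha : a ∈ p.support) :
    G.dist u a + G.dist a v ≤ p.length := by
  classical
  exact calc G.dist u a + G.dist a v ≤ (p.takeUntil a ha).length + (p.dropUntil a ha).length :=
        add_le_add (dist_le _) (dist_le _)
    _ = p.length := by rw [← Walk.length_append, p.take_spec]

lemma Adj.dist_le_dist_add_one {a b : V} (h : G.Adj a b) (u : V) :
    G.dist u b ≤ G.dist u a + 1 := by
  simpa [dist_eq_one_iff_adj.mpr h] using h.reachable.dist_triangle_right u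

lemma Adj.dist_add_one_eq {u a b : V} (h : G.Adj a b) (hlt : G.dist u b < G.dist u a) :
    G.dist u b + 1 = G.dist u a :=
  le_antisymm hlt (h.symm.dist_le_dist_add_one u)

lemma dist_le_two_of_adj_of_adj {a b c : V} (hab : G.Adj a b) (hbc : G.Adj b c) :
    G.dist a c ≤ 2 := by
  simpa using dist_le (.cons hab (.cons hbc .nil))

lemma Connected.two_le_dist (hG : G.Connected) {a b : V} (hne : a ≠ b) (hab : ¬G.Adj a b) :
    2 ≤ G.dist a b := by
  have h0 : G.dist a b ≠ 0 := fun h => hne (hG.dist_eq_zero_iff.mp h)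
  have h1 : G.dist a b ≠ 1 := fun h => hab (dist_eq_one_iff_adj.mp h)
  omega

lemma Connected.exists_adj_dist_eq (hG : G.Connected) (u : V) {v : V} {n : ℕ}
    (h : G.dist u v = n + 1) : ∃ w, G.Adj w v ∧ G.dist u w = n := by
  obtain ⟨p, hp⟩ := hG.exists_walk_length_eq_dist v u
  rw [dist_comm, h] at hp
  cases p with
  | nil => simp at hp
  | cons hvw q =>
    rw [Walk.length_cons] at hp
    refine ⟨_, hvw.symm, le_antisymm ?_ ?_⟩
    · rw [dist_comm]
      have := dist_le q
      omega
    · have := hvw.symm.dist_le_dist_add_one u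
      omega

end SimpleGraph

namespace DistanceHereditary

variable {V : Type*} {G : SimpleGraph V}

theorem le_add_dist_of_walk (hDH : DistanceHereditary G) {a b : V} (p : G.Walk a b) {f : V → ℕ}
    (hf : ∀ x ∈ p.support, ∀ y ∈ p.support, G.Adj x y → f y ≤ f x + 1) :
    f b ≤ f a + G.dist a b := by
  have hp := p.connected_induce_support
  have := (hp.preconnected ⟨a, p.start_mem_support⟩ ⟨b, p.end_mem_support⟩).le_add_dist
    (f := fun x : {v | v ∈ p.support} => f x) fun x y hxy => hf x x.2 y y.2 hxy
  rwa [hDH _ hp] at this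

theorem adj_of_adj_of_walk (hDH : DistanceHereditary G) (hG : G.Connected) {u x y z : V}
    (w : G.Walk x y) (hw : ∀ t ∈ w.support, G.dist u z < G.dist u t)
    (hy : G.dist u y ≤ G.dist u z + 1) (hzx : G.Adj z x) : G.Adj z y := by
  by_contra hzy
  obtain ⟨p, hp⟩ := hG.exists_walk_length_eq_dist u z
  set i := G.dist u z
  set q := p.append (.cons hzx w)
  have hq : ∀ t ∈ q.support, G.dist u t + G.dist t z ≤ i ∨ i < G.dist u t := by
    intro t ht
    rw [Walk.mem_support_append_iff, Walk.support_cons, List.mem_cons] at ht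
    rcases ht with ht | rfl | ht
    · exact .inl (hp ▸ p.dist_add_dist_le_length ht)
    · exact .inl (by rw [SimpleGraph.dist_self, add_zero])
    · exact .inr (hw t ht)
  -- `f` (the distance from `u` up to the level of `z`, then that level plus the distance from `z`)
  -- grows by at most one along each edge of `q`, yet overshoots at `y`, a non-neighbour of `z`
  let f : V → ℕ := fun t => if G.dist u t ≤ i then G.dist u t else i + G.dist z t
  have hf : ∀ a ∈ q.support, ∀ b ∈ q.support, G.Adj a b → f b ≤ f a + 1 := by
    intro a ha b hb hab
    have := hab.dist_le_dist_add_one u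
    have := hab.symm.dist_le_dist_add_one u
    have := hab.dist_le_dist_add_one z
    have : G.dist z a = G.dist a z := dist_comm
    have := hq a ha
    have := hq b hb
    simp only [f]
    split_ifs <;> omega
  have hf_le := hDH.le_add_dist_of_walk q hf
  have hiy := hw y w.end_mem_support
  have hzy2 := hG.two_le_dist (fun e => (e ▸ hiy).false) hzy
  simp only [f, SimpleGraph.dist_self, zero_le, if_true, zero_add, not_le.mpr hiy, if_false]
    at hf_le
  omega

theorem adj_of_adj_of_adj (hDH : DistanceHereditary G) (hG : G.Connected) {u x y z : V}
    (hzx : G.Adj z x) (hxy : G.Adj x y) (hx : G.dist u z < G.dist u x)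
    (hy : G.dist u y = G.dist u z + 1) : G.Adj z y := by
  refine hDH.adj_of_adj_of_walk hG (.cons hxy .nil) ?_ hy.le hzx
  simp only [Walk.support_cons, Walk.support_nil, List.mem_cons, List.not_mem_nil, or_false]
  rintro t (rfl | rfl) <;> omega

theorem adj_of_adj_of_adj_of_adj (hDH : DistanceHereditary G) (hG : G.Connected)
    {u x m y z : V} (hzx : G.Adj z x) (hxm : G.Adj x m) (hmy : G.Adj m y)
    (hx : G.dist u z < G.dist u x) (hm : G.dist u z < G.dist u m)
    (hy : G.dist u y = G.dist u z + 1) : G.Adj z y := by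
  refine hDH.adj_of_adj_of_walk hG (.cons hxm (.cons hmy .nil)) ?_ hy.le hzx
  simp only [Walk.support_cons, Walk.support_nil, List.mem_cons, List.not_mem_nil, or_false]
  rintro t (rfl | rfl | rfl) <;> omega

theorem two_lt_dist_of_isInducedP4 (hDH : DistanceHereditary G) (hG : G.Connected) {a b c d : V}
    (hP : G.IsInducedP4 a b c d) : 2 < G.dist a d := by
  obtain ⟨hab, hbc, hcd, hac, had, hbd⟩ := hP
  by_contra! hd
  have hc := hG.two_le_dist (by rintro rfl; exact had hcd) hac
  have hd' := hG.two_le_dist (by rintro rfl; exact hac hcd.symm) had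
  have hb : G.dist a b = 1 := dist_eq_one_iff_adj.mpr hab
  exact hbd (hDH.adj_of_adj_of_adj hG (u := a) hbc hcd (by omega) (by omega))

theorem p4Free_induce_of_forall_adj (hDH : DistanceHereditary G) (hG : G.Connected) {s : Set V}
    {w : V} (hw : ∀ t ∈ s, G.Adj w t) : (G.induce s).P4Free := by
  intro a b c d hP
  have := hDH.two_lt_dist_of_isInducedP4 hG hP.of_induce
  have := dist_le_two_of_adj_of_adj (hw a a.2).symm (hw d d.2)
  omega

/-- The component of `x` in the top level is a cograph whose vertices all have the same neighbours
one level down. -/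
theorem exists_twins_of_adj_of_forall_dist_le [Finite V] (hDH : DistanceHereditary G)
    (hG : G.Connected) {u x y : V} (hmax : ∀ t, G.dist u t ≤ G.dist u x)
    (hy : G.dist u y = G.dist u x) (hxy : G.Adj x y) : ∃ p q, p ≠ q ∧ G.Twins p q := by
  set k := G.dist u x
  set C : Set V := {t | ∃ w : G.Walk x t, ∀ s ∈ w.support, G.dist u s = k}
  have hCk : ∀ t ∈ C, G.dist u t = k := fun t ⟨w, hw⟩ => hw t w.end_mem_support
  have hxC : x ∈ C := ⟨.nil, by simp [k]⟩
  have hCadj : ∀ t ∈ C, ∀ s, G.Adj t s → G.dist u s = k → s ∈ C := by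
    rintro t ⟨w, hw⟩ s hts hs
    refine ⟨w.concat hts, fun r hr => ?_⟩
    rw [Walk.support_concat, List.mem_append, List.mem_singleton] at hr
    exact hr.elim (hw r) fun e => e ▸ hs
  have hyC := hCadj x hxC y hxy hy
  have hsame : ∀ p ∈ C, ∀ q ∈ C, ∀ z, G.dist u z + 1 = k → G.Adj z p → G.Adj z q := by
    rintro p ⟨wp, hwp⟩ q ⟨wq, hwq⟩ z hz hzp
    refine hDH.adj_of_adj_of_walk hG (u := u) (wp.reverse.append wq) (fun s hs => ?_)
      (by rw [hwq q wq.end_mem_support]; omega) hzp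
    rw [Walk.mem_support_append_iff, Walk.support_reverse, List.mem_reverse] at hs
    rcases hs with hs | hs <;> [rw [hwp s hs]; rw [hwq s hs]] <;> omega
  have hk : G.dist u x ≠ 0 := fun h => by
    have hux := hG.dist_eq_zero_iff.mp h
    have huy := hG.dist_eq_zero_iff.mp (hy.trans h)
    exact hxy.ne (hux.symm.trans huy)
  obtain ⟨z, hzx, hz⟩ := hG.exists_adj_dist_eq u (v := x) (n := k - 1) (by omega)
  have hP4 := hDH.p4Free_induce_of_forall_adj hG (s := C) (w := z)
    fun t ht => hsame x hxC t ht z (by omega) hzx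
  have : Nontrivial C := ⟨⟨x, hxC⟩, ⟨y, hyC⟩, fun e => hxy.ne (congrArg Subtype.val e)⟩
  obtain ⟨p, q, hpq, htw⟩ := hP4.exists_twins
  -- outside `C`, vertices of `C` only see the level below
  have hout : ∀ p ∈ C, ∀ q ∈ C, ∀ t ∉ C, G.Adj p t → G.Adj q t := by
    intro p hp q hq t ht hpt
    have hlt : G.dist u t < G.dist u p :=
      hCk p hp ▸ (hmax t).lt_of_ne fun h => ht (hCadj p hp t hpt h)
    exact (hsame p hp q hq t (hCk p hp ▸ hpt.dist_add_one_eq hlt) hpt.symm).symm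
  exact ⟨p, q, Subtype.coe_injective.ne hpq,
    htw.of_induce fun t ht => ⟨hout p p.2 q q.2 t ht, hout q q.2 p p.2 t ht⟩⟩

/-- If `s` lies two levels below `v` this is `adj_of_adj_of_adj_of_adj`; otherwise `s` is joined
outside `N[v]` to a common neighbour `z` of `N(v)` two levels below `v`, and the same lemmas apply
with root `v`. -/
theorem adj_of_adj_of_neighborSet_minimal (hDH : DistanceHereditary G) (hG : G.Connected)
    {u v : V} (hmax : ∀ t, G.dist u t ≤ G.dist u v)
    (hind : ∀ a b, G.dist u a = G.dist u v → G.dist u b = G.dist u v → ¬G.Adj a b)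
    (hmin : ∀ s, G.dist u s = G.dist u v → s ≠ v → ¬G.neighborSet s ⊆ G.neighborSet v)
    {s d d' : V} (hsv : s ≠ v) (hvs : ¬G.Adj v s) (hvd : G.Adj v d) (hvd' : G.Adj v d')
    (hsd : G.Adj s d) : G.Adj s d' := by
  set k := G.dist u v
  have hbelow : ∀ a b, G.dist u a = k → G.Adj a b → G.dist u b + 1 = k := fun a b ha hab =>
    ha ▸ hab.dist_add_one_eq (ha ▸ (hmax b).lt_of_ne fun hb => hind a b ha hb hab)
  have hd := hbelow v d rfl hvd
  have hd' := hbelow v d' rfl hvd'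
  obtain rfl | hdd' := eq_or_ne d d'
  · exact hsd
  have hk : 2 ≤ k := by
    by_contra! hk
    exact hdd' ((hG.dist_eq_zero_iff.mp (by omega : G.dist u d = 0)).symm.trans
      (hG.dist_eq_zero_iff.mp (by omega)))
  have hdd : ∀ z, G.dist u z + 2 = k → G.Adj z d → G.Adj z d' := fun z hz hzd =>
    hDH.adj_of_adj_of_adj_of_adj hG (u := u) hzd hvd.symm hvd' (by omega) (by omega) (by omega)
  have hs₁ := hsd.dist_le_dist_add_one u
  have hs₂ := hsd.symm.dist_le_dist_add_one u
  obtain hs | hs : G.dist u s + 2 = k ∨ k ≤ G.dist u s + 1 := by omega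
  · exact hdd s hs hsd
  obtain ⟨z, hzd, hz⟩ := hG.exists_adj_dist_eq u (v := d) (n := k - 2) (by omega)
  have hzd' := hdd z (by omega) hzd
  have hv₁ : G.dist v d' = 1 := dist_eq_one_iff_adj.mpr hvd'
  have hv₂ : ∀ t, t ≠ v → ¬G.Adj v t → G.dist v d' < G.dist v t := fun t htv hvt =>
    hv₁ ▸ hG.two_le_dist htv.symm hvt
  have hvz := hv₂ z (by rintro rfl; omega) fun h => by
    have := h.symm.dist_le_dist_add_one u
    omega
  have hvs' : G.dist v s = G.dist v d' + 1 :=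
    le_antisymm (by rw [hv₁]; exact dist_le_two_of_adj_of_adj hvd hsd.symm) (hv₂ s hsv hvs)
  obtain hs | hs : G.dist u s + 1 = k ∨ G.dist u s = k := by have := hmax s; omega
  · have hzs := hDH.adj_of_adj_of_adj hG (u := u) hzd hsd.symm (by omega) (by omega)
    exact (hDH.adj_of_adj_of_adj hG hzd'.symm hzs hvz hvs').symm
  · obtain ⟨e, hse, hve⟩ := Set.not_subset.mp (hmin s hs hsv)
    have hse : G.Adj s e := hse
    have he := hbelow s e hs hse
    have hze := hDH.adj_of_adj_of_adj_of_adj hG (u := u) hzd hsd.symm hse (by omega) (by omega)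
      (by omega)
    have hve := hv₂ e (by rintro rfl; exact hvs hse.symm) hve
    exact (hDH.adj_of_adj_of_adj_of_adj hG hzd'.symm hze hse.symm hvz hve hvs').symm

/-- A top-level vertex `v` with fewest neighbours is pendant, has a false twin on the top level, or
its neighbourhood is a cograph whose vertices see the same vertices outside it. -/
theorem exists_twins_or_pendant_of_forall_not_adj [Finite V] [Nontrivial V]
    (hDH : DistanceHereditary G) (hG : G.Connected) {u m : V} (hmax : ∀ t, G.dist u t ≤ G.dist u m)
    (hind : ∀ a b, G.dist u a = G.dist u m → G.dist u b = G.dist u m → ¬G.Adj a b) :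
    (∃ x y, x ≠ y ∧ G.Twins x y) ∨ ∃ y w, G.neighborSet y = {w} := by
  obtain ⟨v, hv, hvmin⟩ := Set.exists_min_image {t | G.dist u t = G.dist u m}
    (fun t => (G.neighborSet t).ncard) (Set.toFinite _) ⟨m, rfl⟩
  have hv : G.dist u v = G.dist u m := hv
  rw [← hv] at hmax hind
  obtain ⟨t, htu⟩ := exists_ne u
  have hk : G.dist u v ≠ 0 := fun h => htu (hG.dist_eq_zero_iff.mp (by have := hmax t; omega)).symm
  obtain ⟨d, hdv, -⟩ := hG.exists_adj_dist_eq u (v := v) (n := G.dist u v - 1) (by omega)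
  by_cases hpend : (G.neighborSet v).Subsingleton
  · exact .inr ⟨v, d, hpend.eq_singleton_of_mem hdv.symm⟩
  left
  by_cases hdup : ∃ s, G.dist u s = G.dist u v ∧ s ≠ v ∧ G.neighborSet s ⊆ G.neighborSet v
  · obtain ⟨s, hs, hsv, hsub⟩ := hdup
    exact ⟨s, v, hsv, twins_of_neighborSet_eq
      (Set.eq_of_subset_of_ncard_le hsub (hvmin s (hs.trans hv)))⟩
  push Not at hdup
  have : Nontrivial (G.neighborSet v) := Set.not_subsingleton_iff.mp hpend |>.coe_sort
  obtain ⟨p, q, hpq, htw⟩ := (hDH.p4Free_induce_of_forall_adj hG (s := G.neighborSet v) (w := v)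
    fun t ht => ht).exists_twins
  have hout : ∀ p q t, G.Adj v p → G.Adj v q → t ∉ G.neighborSet v → G.Adj p t → G.Adj q t := by
    intro p q t hp hq ht hpt
    obtain rfl | htv := eq_or_ne t v
    · exact hq.symm
    · exact (hDH.adj_of_adj_of_neighborSet_minimal hG hmax hind
        (fun s hs hsv hsub => hdup s hs hsv hsub) htv ht hp hq hpt.symm).symm
  exact ⟨p, q, Subtype.coe_injective.ne hpq, htw.of_induce fun t ht =>
    ⟨hout p q t p.2 q.2 ht, hout q p t q.2 p.2 ht⟩⟩

end DistanceHereditary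

/-- every finite connected distance-hereditary graph on at least two
vertices has a pendant vertex, a true twin, or a false twin. -/
theorem exists_pendant_or_twin_of_distanceHereditary {V : Type*} [Fintype V]
    (G : SimpleGraph V) (hcard : 2 ≤ Fintype.card V)
    (hconn : G.Connected) (hDH : DistanceHereditary G) :
    ∃ y : V, (∃ w : V, G.neighborSet y = {w}) ∨
      (∃ x : V, x ≠ y ∧ insert x (G.neighborSet x) = insert y (G.neighborSet y)) ∨
      (∃ x : V, x ≠ y ∧ G.neighborSet x = G.neighborSet y) := by
  have : Nontrivial V := Fintype.one_lt_card_iff_nontrivial.mp hcard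
  obtain ⟨u⟩ := hconn.nonempty
  obtain ⟨m, hm⟩ := Finite.exists_max (G.dist u)
  suffices (∃ x y, x ≠ y ∧ G.Twins x y) ∨ ∃ y w, G.neighborSet y = {w} by
    obtain ⟨x, y, hxy, htw⟩ | ⟨y, w, hw⟩ := this
    · by_cases hadj : G.Adj x y
      · exact ⟨y, .inr (.inl ⟨x, hxy, htw.insert_neighborSet_eq hadj⟩)⟩
      · exact ⟨y, .inr (.inr ⟨x, hxy, htw.neighborSet_eq hadj⟩)⟩
    · exact ⟨y, .inl ⟨w, hw⟩⟩
  by_cases htop : ∃ x y, G.dist u x = G.dist u m ∧ G.dist u y = G.dist u m ∧ G.Adj x y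
  · obtain ⟨x, y, hx, hy, hxy⟩ := htop
    exact .inl (hDH.exists_twins_of_adj_of_forall_dist_le hconn (hx ▸ hm) (hy.trans hx.symm) hxy)
  · push Not at htop
    exact hDH.exists_twins_or_pendant_of_forall_not_adj hconn hm htop
end

section
/- Let G be a finite simple graph containing no induced house, hole, domino or gem (equivalently, a distance-hereditary graph), let x be a vertex of G, and let u, v be two vertices at distance exactly 2 from x. If u and v are adjacent, then N(u) ∩ N(x) = N(v) ∩ N(x). (Proposition 2(i), adjacent case.) -/
open SimpleGraph

/-! If `w` is a common neighbour of `x` and `u` but not of `v`, pick a common neighbour `b` of `x`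
and `v`. Then `x w u v b` is a closed walk with `x` non-adjacent to `u` and `v`, and according to
the two remaining unknown pairs `w b` and `u b` these five vertices induce a hole `C₅`, a house
(twice) or a gem. -/

namespace SimpleGraph

variable {V : Type*} {G : SimpleGraph V}

lemma edist_eq_two_of_dist_eq_two {u v : V} (h : G.dist u v = 2) : G.edist u v = 2 :=
  (ENat.toNat_eq_iff two_ne_zero).mp h

lemma exists_adj_adj_of_dist_eq_two {u v : V} (h : G.dist u v = 2) :
    ¬G.Adj u v ∧ ∃ w, G.Adj u w ∧ G.Adj w v := by
  obtain ⟨-, hnadj, w, hw⟩ := edist_eq_two_iff.mp (edist_eq_two_of_dist_eq_two h)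
  exact ⟨hnadj, w, hw.1, hw.2.symm⟩

end SimpleGraph

open SimpleGraph

section

variable {V : Type*} {G : SimpleGraph V}

/-- For a point-determining `H` (injective `neighborSet`), preserving adjacency and
non-adjacency already forces injectivity. -/
lemma containsInduced_of_adj_iff {α : Type*} {H : SimpleGraph α}
    (hH : Function.Injective H.neighborSet) (f : α → V)
    (hf : ∀ i j, H.Adj i j ↔ G.Adj (f i) (f j)) : ContainsInduced H G := by
  refine ⟨f, fun i j hij => hH ?_, hf⟩
  ext k
  simp only [mem_neighborSet, hf, hij]

lemma containsInduced_of_adj_iff_of_lt {n : ℕ} {H : SimpleGraph (Fin n)}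
    (hH : Function.Injective H.neighborSet) (f : Fin n → V)
    (hf : ∀ i j, i < j → (H.Adj i j ↔ G.Adj (f i) (f j))) : ContainsInduced H G := by
  refine containsInduced_of_adj_iff hH f fun i j => ?_
  rcases lt_trichotomy i j with hij | rfl | hij
  · exact hf i j hij
  · simp
  · rw [H.adj_comm, G.adj_comm]
    exact hf j i hij

lemma neighborSet_injective_of_forall {α : Type*} {H : SimpleGraph α}
    (hH : ∀ i j, (∀ k, H.Adj i k ↔ H.Adj j k) → i = j) : Function.Injective H.neighborSet :=
  fun i j hij => hH i j fun k => Set.ext_iff.mp hij k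

lemma house_neighborSet_injective : Function.Injective house.neighborSet :=
  neighborSet_injective_of_forall <| by
    simp only [house, fromEdgeSet_adj, Set.mem_insert_iff, Set.mem_singleton_iff]; decide

lemma gem_neighborSet_injective : Function.Injective gem.neighborSet :=
  neighborSet_injective_of_forall <| by
    simp only [gem, fromEdgeSet_adj, Set.mem_insert_iff, Set.mem_singleton_iff]; decide

lemma cycleGraph_five_neighborSet_injective : Function.Injective (cycleGraph 5).neighborSet :=
  neighborSet_injective_of_forall (by decide)

lemma HHDGFree.adj_of_closed_walk_five (hG : HHDGFree G) {x w u v b : V}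
    (hxw : G.Adj x w) (hwu : G.Adj w u) (huv : G.Adj u v) (hvb : G.Adj v b) (hbx : G.Adj b x)
    (hxu : ¬G.Adj x u) (hxv : ¬G.Adj x v) : G.Adj w v := by
  obtain ⟨noHouse, noHole, -, noGem⟩ := hG
  by_contra hwv
  by_cases hwb : G.Adj w b <;> by_cases hub : G.Adj u b
  · exact noGem <| containsInduced_of_adj_iff_of_lt gem_neighborSet_injective ![x, w, u, v, b]
      (by intro i j _; fin_cases i <;> fin_cases j <;> simp_all [gem, adj_comm])
  · exact noHouse <| containsInduced_of_adj_iff_of_lt house_neighborSet_injective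
      ![w, b, v, u, x] (by intro i j _; fin_cases i <;> fin_cases j <;> simp_all [house, adj_comm])
  · exact noHouse <| containsInduced_of_adj_iff_of_lt house_neighborSet_injective
      ![u, b, x, w, v] (by intro i j _; fin_cases i <;> fin_cases j <;> simp_all [house, adj_comm])
  · exact noHole 5 le_rfl <| containsInduced_of_adj_iff_of_lt
      cycleGraph_five_neighborSet_injective ![x, w, u, v, b]
      (by intro i j _; fin_cases i <;> fin_cases j <;> simp_all +decide [adj_comm])

lemma HHDGFree.adj_of_dist_eq_two (hG : HHDGFree G) {x u v w : V} (hu : G.dist x u = 2)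
    (hv : G.dist x v = 2) (huv : G.Adj u v) (huw : G.Adj u w) (hxw : G.Adj x w) : G.Adj v w := by
  obtain ⟨hxv, b, hxb, hbv⟩ := exists_adj_adj_of_dist_eq_two hv
  exact (hG.adj_of_closed_walk_five hxw huw.symm huv hbv.symm hxb.symm
    (exists_adj_adj_of_dist_eq_two hu).1 hxv).symm

end

theorem prop2i_adjacent_general {V : Type*} (G : SimpleGraph V) (hG : HHDGFree G)
    (x u v : V) (hu : G.dist x u = 2) (hv : G.dist x v = 2) (huv : G.Adj u v) :
    G.neighborSet u ∩ G.neighborSet x = G.neighborSet v ∩ G.neighborSet x := by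
  ext w
  simp only [Set.mem_inter_iff, mem_neighborSet]
  exact ⟨fun ⟨huw, hxw⟩ => ⟨hG.adj_of_dist_eq_two hu hv huv huw hxw, hxw⟩,
    fun ⟨hvw, hxw⟩ => ⟨hG.adj_of_dist_eq_two hv hu huv.symm hvw hxw, hxw⟩⟩

/-- Proposition 2(i), adjacent case. -/
theorem prop2i_adjacent {V : Type*} [Fintype V] (G : SimpleGraph V) (hG : HHDGFree G)
    (x u v : V) (hu : G.dist x u = 2) (hv : G.dist x v = 2) (huv : G.Adj u v) :
    G.neighborSet u ∩ G.neighborSet x = G.neighborSet v ∩ G.neighborSet x :=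
  prop2i_adjacent_general G hG x u v hu hv huv
end

section
/- Let G be a finite simple graph, let Q be a clique cycle-transversal of G, and let x be a vertex of G with x ∉ Q. Then N(x) \ Q is a stable (independent) set; consequently, the subgraph of G induced by N(x) is a split graph with the partition (N(x) \ Q, Q ∩ N(x)) into a stable set and a clique. (Claim 1 in the proof of the main theorem.) -/
open SimpleGraph

/-- Claim 1: if `Q` is a cct of `G` and `x ∉ Q`, then `N(x) \ Q`
is stable; hence `G[N(x)]` is a split graph with partition `(N(x) \ Q, Q ∩ N(x))`. -/
theorem neighborhood_split_of_cct {V : Type*} [Fintype V] (G : SimpleGraph V)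
    (Q : Set V) (hQ : IsCCT G Q) (x : V) (hx : x ∉ Q) :
    IsStableSet G (G.neighborSet x \ Q) ∧ G.IsClique (Q ∩ G.neighborSet x) ∧
      (G.neighborSet x \ Q) ∪ (Q ∩ G.neighborSet x) = G.neighborSet x ∧
      Disjoint (G.neighborSet x \ Q) (Q ∩ G.neighborSet x) := by
  obtain ⟨hclique, htrans⟩ := hQ
  refine ⟨?_, ?_, ?_, ?_⟩
  · intro u hu v hv huv hadj
    have hxu : G.Adj x u := hu.1
    have hvx : G.Adj v x := (hv.1 : G.Adj x v).symm
    have hc : (Walk.cons hxu (Walk.cons hadj (Walk.cons hvx Walk.nil))).IsCycle := by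
      have := hxu.ne; have := hadj.ne; have := hvx.ne
      simp [Walk.isCycle_def, Walk.isTrail_def, *]
      aesop
    obtain ⟨w, hw, hwQ⟩ := htrans _ hc
    simp only [Walk.support_cons, Walk.support_nil, List.mem_cons, List.mem_singleton,
      List.not_mem_nil, or_false] at hw
    rcases hw with rfl | rfl | rfl | rfl <;> [exact hx hwQ; exact hu.2 hwQ; exact hv.2 hwQ;
      exact hx hwQ]
  · exact hclique.subset Set.inter_subset_left
  · ext v; constructor
    · rintro (h | h); exact h.1; exact h.2
    · intro h; by_cases hvQ : v ∈ Q
      · exact Or.inr ⟨hvQ, h⟩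
      · exact Or.inl ⟨h, hvQ⟩
  · rw [Set.disjoint_left]; rintro v ⟨_, hvQ⟩ ⟨hvQ', _⟩; exact hvQ hvQ'
end

section
/- Let G be a finite simple graph with two adjacent vertices x and y that are true twins, i.e., N_G[x] = N_G[y]. Let Q be a clique cycle-transversal of the induced subgraph G − y on V(G) \ {y}, and suppose x ∉ Q. Then every induced (chordless) cycle of G containing no vertex of Q is a triangle with vertex set {x, y, a} for some common neighbor a of x and y with a ∉ Q. (This is the reduction in Case 1 of the proof of the main theorem: after adding a true twin, only the triangles xya need to be covered.) -/
open SimpleGraph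

/-! A cycle of `G` avoiding `y` is a cycle of `G - y`, so a cycle avoiding `Q` passes through `y`.
Swapping the true twins `x` and `y` is an automorphism of `G`, and `x ∉ Q`, so it also passes
through `x`. Being induced, the cycle uses the edge `xy`; the other cycle-neighbour `a` of `y` is
adjacent to `x`, so `xa` is a cycle edge too. Then each of `x`, `y`, `a` has its two
cycle-neighbours among the other two, and by connectedness the cycle is the triangle `xya`. -/

namespace SimpleGraph

variable {V : Type*} {G : SimpleGraph V}

theorem _root_.IsCycleTransversal.exists_mem_support_of_support_subset {S T : Set V}
    (hT : IsCycleTransversal (G.induce S) (Subtype.val ⁻¹' T)) {v : V} {c : G.Walk v v}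
    (hc : c.IsCycle) (hS : ∀ w ∈ c.support, w ∈ S) : ∃ w ∈ c.support, w ∈ T := by
  have hc' : (c.induce S hS).IsCycle := by
    rw [← Walk.isCycle_map_iff_of_injective (f := (Embedding.induce S).toHom)
      Subtype.val_injective, Walk.map_induce]
    exact hc
  obtain ⟨w, hw, hwT⟩ := hT _ hc'
  exact ⟨w, by simpa using hw, hwT⟩

theorem adj_iff_of_insert_neighborSet_eq {x y w : V}
    (htwin : insert x (G.neighborSet x) = insert y (G.neighborSet y)) (hwx : w ≠ x)
    (hwy : w ≠ y) : G.Adj x w ↔ G.Adj y w := by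
  simpa [hwx, hwy] using Set.ext_iff.mp htwin w

def Iso.swapOfTwins [DecidableEq V] {x y : V}
    (htwin : insert x (G.neighborSet x) = insert y (G.neighborSet y)) : G ≃g G where
  toEquiv := Equiv.swap x y
  map_rel_iff' {u w} := by
    have htw := fun w => adj_iff_of_insert_neighborSet_eq (w := w) htwin
    simp only [Equiv.swap_apply_def]
    split_ifs <;> subst_vars <;> grind [G.adj_comm, SimpleGraph.irrefl]

theorem Walk.IsCycle.exists_isCycle_replace_twin {x y v : V}
    (htwin : insert x (G.neighborSet x) = insert y (G.neighborSet y)) {c : G.Walk v v}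
    (hc : c.IsCycle) (hx : x ∉ c.support) :
    ∃ (u : V) (d : G.Walk u u), d.IsCycle ∧ y ∉ d.support ∧
      ∀ w ∈ d.support, w = x ∨ w ∈ c.support := by
  classical
  let φ := Iso.swapOfTwins htwin
  refine ⟨_, c.map φ.toHom, hc.map φ.injective, ?_, ?_⟩ <;>
    simp only [Walk.support_map, List.mem_map]
  · rintro ⟨u, hu, huy⟩
    have hux : u = x := by simpa [φ, Iso.swapOfTwins, Equiv.swap_apply_eq_iff] using huy
    exact hx (hux ▸ hu)
  · rintro w ⟨u, hu, rfl⟩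
    change Equiv.swap x y u = x ∨ Equiv.swap x y u ∈ c.support
    rw [Equiv.swap_apply_def]
    split_ifs with hux
    · exact absurd (hux ▸ hu) hx
    · exact Or.inl rfl
    · exact Or.inr hu

theorem Walk.support_subset_of_closed_under_edges {S : Set V} {u v : V} (w : G.Walk u v)
    (hu : u ∈ S) (hS : ∀ a b, s(a, b) ∈ w.edges → a ∈ S → b ∈ S) : ∀ z ∈ w.support, z ∈ S := by
  induction w with
  | nil => simpa
  | cons h p ih =>
    simp only [Walk.support_cons, List.mem_cons, forall_eq_or_imp]
    exact ⟨hu, ih (hS _ _ (by simp) hu) fun a b hab => hS a b (by simp [hab])⟩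

theorem Walk.IsCycle.neighborSet_toSubgraph_eq_pair {u p q r : V} {c : G.Walk u u}
    (hc : c.IsCycle) (hq : s(p, q) ∈ c.edges) (hr : s(p, r) ∈ c.edges) (hqr : q ≠ r) :
    c.toSubgraph.neighborSet p = {q, r} := by
  have htwo := hc.ncard_neighborSet_toSubgraph_eq_two (c.fst_mem_support_of_mem_edges hq)
  symm
  apply Set.eq_of_subset_of_ncard_le _ _ (Set.finite_of_ncard_ne_zero (by omega))
  · simp [Set.insert_subset_iff, Walk.adj_toSubgraph_iff_mem_edges, hq, hr]
  · rw [htwo, Set.ncard_pair hqr]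

theorem Walk.IsCycle.exists_mem_edges_ne {u v : V} {c : G.Walk u u} (hc : c.IsCycle)
    (hv : v ∈ c.support) (x : V) : ∃ a, s(v, a) ∈ c.edges ∧ a ≠ x := by
  obtain ⟨a, ha, hax⟩ := (c.toSubgraph.neighborSet v).exists_ne_of_one_lt_ncard
    (by rw [hc.ncard_neighborSet_toSubgraph_eq_two hv]; norm_num) x
  exact ⟨a, Walk.adj_toSubgraph_iff_mem_edges.mp ha, hax⟩

theorem Walk.IsCycle.support_eq_of_triangle {u x y a : V} {c : G.Walk u u} (hc : c.IsCycle)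
    (hxy : s(x, y) ∈ c.edges) (hya : s(y, a) ∈ c.edges) (hxa : s(x, a) ∈ c.edges) :
    {w | w ∈ c.support} = {x, y, a} := by
  classical
  have hx := c.fst_mem_support_of_mem_edges hxy
  have hNx := hc.neighborSet_toSubgraph_eq_pair hxy hxa (c.adj_of_mem_edges hya).ne
  have hNy := hc.neighborSet_toSubgraph_eq_pair (Sym2.eq_swap ▸ hxy) hya
    (c.adj_of_mem_edges hxa).ne
  have hNa := hc.neighborSet_toSubgraph_eq_pair (Sym2.eq_swap ▸ hxa) (Sym2.eq_swap ▸ hya)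
    (c.adj_of_mem_edges hxy).ne
  have hclosed : ∀ p q, s(p, q) ∈ (c.rotate x hx).edges → p ∈ ({x, y, a} : Set V) →
      q ∈ ({x, y, a} : Set V) := by
    intro p q hpq hp
    have hq : q ∈ c.toSubgraph.neighborSet p := Walk.adj_toSubgraph_iff_mem_edges.mpr
      ((c.rotate_edges x hx).perm.mem_iff.mp hpq)
    rcases hp with rfl | rfl | rfl <;> simp_all <;> tauto
  ext w
  refine ⟨fun hw => ?_, ?_⟩
  · exact (c.rotate x hx).support_subset_of_closed_under_edges (by simp) hclosed w
      ((c.mem_support_rotate_iff x hx).mpr hw)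
  · rintro (rfl | rfl | rfl)
    · exact hx
    · exact c.snd_mem_support_of_mem_edges hxy
    · exact c.snd_mem_support_of_mem_edges hxa

end SimpleGraph

theorem induced_cycles_avoiding_Q_are_triangles_general {V : Type*}
    (G : SimpleGraph V) (x y : V)
    (hadj : G.Adj x y)
    (htwin : insert x (G.neighborSet x) = insert y (G.neighborSet y))
    (Q : Set V) (hxQ : x ∉ Q)
    (hQ : IsCCT (G.induce {y}ᶜ) (Subtype.val ⁻¹' Q)) :
    ∀ (v : V) (c : G.Walk v v), c.IsCycle →
      (∀ a ∈ c.support, ∀ b ∈ c.support, G.Adj a b → s(a, b) ∈ c.edges) →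
      (∀ w ∈ c.support, w ∉ Q) →
      ∃ a : V, G.Adj x a ∧ G.Adj y a ∧ a ∉ Q ∧
        {w : V | w ∈ c.support} = ({x, y, a} : Set V) := by
  intro v c hc hind havoid
  have mem_of_avoids : ∀ {u} (d : G.Walk u u), d.IsCycle → (∀ w ∈ d.support, w ∉ Q) →
      y ∈ d.support := by
    intro u d hd hdQ
    by_contra hy
    obtain ⟨w, hw, hwQ⟩ := hQ.2.exists_mem_support_of_support_subset hd
      fun w hw hwy => hy (hwy ▸ hw)
    exact hdQ w hw hwQ
  have hy := mem_of_avoids c hc havoid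
  have hx : x ∈ c.support := by
    by_contra hx
    obtain ⟨u, d, hd, hyd, hdc⟩ := hc.exists_isCycle_replace_twin htwin hx
    exact hyd (mem_of_avoids d hd fun w hw => (hdc w hw).elim (· ▸ hxQ) (havoid w))
  have hxy : s(x, y) ∈ c.edges := hind x hx y hy hadj
  obtain ⟨a, hya, hax⟩ := hc.exists_mem_edges_ne hy x
  have hGya := c.adj_of_mem_edges hya
  have ha := c.snd_mem_support_of_mem_edges hya
  have hxa : G.Adj x a := (adj_iff_of_insert_neighborSet_eq htwin hax hGya.ne').mpr hGya
  exact ⟨a, hxa, hGya, havoid a ha, hc.support_eq_of_triangle hxy hya (hind x hx a ha hxa)⟩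

/-- after adding a true twin `y` of `x`, if `Q` is a cct of `G - y`
with `x ∉ Q`, then every induced cycle of `G` avoiding `Q` is a triangle `{x, y, a}`
for a common neighbor `a ∉ Q` of `x` and `y`. -/
theorem induced_cycles_avoiding_Q_are_triangles {V : Type*} [Fintype V]
    (G : SimpleGraph V) (x y : V)
    (hadj : G.Adj x y)
    (htwin : insert x (G.neighborSet x) = insert y (G.neighborSet y))
    (Q : Set V) (hyQ : y ∉ Q) (hxQ : x ∉ Q)
    (hQ : IsCCT (G.induce {y}ᶜ) (Subtype.val ⁻¹' Q)) :
    ∀ (v : V) (c : G.Walk v v), c.IsCycle →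
      (∀ a ∈ c.support, ∀ b ∈ c.support, G.Adj a b → s(a, b) ∈ c.edges) →
      (∀ w ∈ c.support, w ∉ Q) →
      ∃ a : V, G.Adj x a ∧ G.Adj y a ∧ a ∉ Q ∧
        {w : V | w ∈ c.support} = ({x, y, a} : Set V) :=
  induced_cycles_avoiding_Q_are_triangles_general G x y hadj htwin Q hxQ hQ
end
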